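/- arXiv:1312.1036 — 12 statements merged into one kernel-verified Lean document; each statement's English description precedes it below -/
import Mathlib

section
/- The set A of natural numbers whose base-b representation begins with the digit 1, i.e., A = ∪_{k≥0} [b^k, 2·b^k) ∩ ℕ, has quotient set R(A) = {a/a' : a, a' ∈ A} dense in [0,∞) when b = 3. -/
/-- The quotient (ratio) set of a set of naturals, viewed in ℝ. -/
def ratioSet (A : Set ℕ) : Set ℝ := {x : ℝ | ∃ m ∈ A, ∃ n ∈ A, x = (m : ℝ) / (n : ℝ)}

/-- Lower asymptotic density of a set of naturals. -/
noncomputable def lowerDensity (A : Set ℕ) : ℝ :=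
  Filter.liminf (fun n : ℕ => (Nat.card ↥(A ∩ Set.Icc 1 n) : ℝ) / (n : ℝ)) Filter.atTop

/-- Upper asymptotic density of a set of naturals. -/
noncomputable def upperDensity (A : Set ℕ) : ℝ :=
  Filter.limsup (fun n : ℕ => (Nat.card ↥(A ∩ Set.Icc 1 n) : ℝ) / (n : ℝ)) Filter.atTop

/-!
If `a ∈ A` and `⌊x a⌋ ∈ A`, then `⌊x a⌋ / a ∈ R(A)` lies within `1 / a` of `x`, so it suffices to
find arbitrarily large such `a`. The set `A` meets every interval `[N, (b/2) N]`; taking `N` just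
above `b^j / x` gives `b^j ≤ x a < (b/2)(b^j + x)`, which is below `2 b^j` once `b < 4` and `j` is
large, so `⌊x a⌋` falls in the block `[b^j, 2 b^j)` of `A`. Finally `0` is a limit of positive `x`.
-/

open Filter

theorem mem_closure_ratioSet_of_frequently {A : Set ℕ} {x : ℝ} (hx : 0 ≤ x)
    (h : ∃ᶠ n in atTop, n ∈ A ∧ ⌊x * n⌋₊ ∈ A) : x ∈ closure (ratioSet A) :=
  mem_closure_of_frequently_of_tendsto
    (h.mono fun n ⟨hn, hfloor⟩ => ⟨_, hfloor, n, hn, rfl⟩)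
    ((tendsto_nat_floor_mul_div_atTop hx).comp tendsto_natCast_atTop_atTop)

def leadingOneSet (b : ℕ) : Set ℕ := {n | ∃ k : ℕ, b ^ k ≤ n ∧ n < 2 * b ^ k}

theorem exists_mem_leadingOneSet_le_half_mul {b N : ℕ} (hb : 2 ≤ b) (hN : N ≠ 0) :
    ∃ a ∈ leadingOneSet b, N ≤ a ∧ 2 * a ≤ b * N := by
  have hlow : b ^ Nat.log b N ≤ N := Nat.pow_log_le_self b hN
  have hhigh : N < b ^ (Nat.log b N + 1) := Nat.lt_pow_succ_log_self (by omega) N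
  by_cases hN2 : N < 2 * b ^ Nat.log b N
  · exact ⟨N, ⟨_, hlow, hN2⟩, le_rfl, by nlinarith⟩
  · have hpow : 0 < b ^ (Nat.log b N + 1) := by positivity
    refine ⟨b ^ (Nat.log b N + 1), ⟨_, le_rfl, by omega⟩, hhigh.le, ?_⟩
    rw [pow_succ']
    nlinarith

theorem frequently_mem_leadingOneSet_floor_mul {b : ℕ} (hb : 2 ≤ b) (hb4 : b < 4) {x : ℝ}
    (hx : 0 < x) : ∃ᶠ n in atTop, n ∈ leadingOneSet b ∧ ⌊x * n⌋₊ ∈ leadingOneSet b := by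
  rw [frequently_atTop]
  intro N
  have hb1 : (1 : ℝ) < b := by exact_mod_cast hb
  obtain ⟨j, hj⟩ := pow_unbounded_of_one_lt (x * (N + b)) hb1
  set M := ⌈(b : ℝ) ^ j / x⌉₊
  have hM : (b : ℝ) ^ j / x ≤ M := Nat.le_ceil _
  have hM' : (M : ℝ) < (b : ℝ) ^ j / x + 1 := Nat.ceil_lt_add_one (by positivity)
  have hM0 : M ≠ 0 := by positivity
  obtain ⟨a, haA, hMa, hab⟩ := exists_mem_leadingOneSet_le_half_mul hb hM0
  have hMa' : (M : ℝ) ≤ a := by exact_mod_cast hMa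
  have hab' : 2 * (a : ℝ) ≤ b * M := by exact_mod_cast hab
  have hbj_le : (b : ℝ) ^ j ≤ x * a := by
    rw [div_le_iff₀ hx] at hM
    nlinarith
  have hbx : x * b < (b : ℝ) ^ j := by nlinarith [N.cast_nonneg (α := ℝ)]
  have hlt : 2 * (x * a) < 4 * (b : ℝ) ^ j :=
    calc 2 * (x * a) = x * (2 * a) := by ring
      _ ≤ x * (b * M) := by gcongr
      _ < x * b * ((b : ℝ) ^ j / x + 1) := by rw [mul_assoc]; gcongr
      _ = b * (b : ℝ) ^ j + x * b := by field_simp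
      _ < (b + 1) * (b : ℝ) ^ j := by linarith
      _ ≤ 4 * (b : ℝ) ^ j := by gcongr; exact_mod_cast hb4
  refine ⟨a, ?_, haA, j, ?_, ?_⟩
  · have hNM : (N : ℝ) < M := by
      rw [← lt_div_iff₀' hx] at hj
      linarith
    exact_mod_cast hNM.le.trans hMa'
  · exact Nat.le_floor (by exact_mod_cast hbj_le)
  · rw [Nat.floor_lt (by positivity)]
    exact_mod_cast (by linarith : x * a < 2 * (b : ℝ) ^ j)

theorem stmt0 :
    Set.Ici (0 : ℝ) ⊆
      closure (ratioSet {n : ℕ | ∃ k : ℕ, 3 ^ k ≤ n ∧ n < 2 * 3 ^ k}) := by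
  rw [← closure_Ioi]
  refine closure_minimal (fun x hx => ?_) isClosed_closure
  exact mem_closure_ratioSet_of_frequently (le_of_lt hx)
    (frequently_mem_leadingOneSet_floor_mul (b := 3) (by norm_num) (by norm_num) hx)
end

section
/- For b ≥ 5 an integer, the set A = ∪_{k≥0} [b^k, 2·b^k) ∩ ℕ of natural numbers whose base-b representation begins with digit 1 is not fractionally dense: its quotient set is not dense in [0,∞). -/
/-!
If `b ^ j ≤ m < 2 * b ^ j` and `b ^ k ≤ n < 2 * b ^ k`, then `m / n < 2` when `j ≤ k` and
`m / n > b / 2` when `j > k`. So no ratio lies in the gap `(2, b / 2)`, which is a nonempty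
open interval as soon as `b ≥ 5`.
-/

def leadingDigitOne (b : ℕ) : Set ℕ := {n : ℕ | ∃ k : ℕ, b ^ k ≤ n ∧ n < 2 * b ^ k}

namespace leadingDigitOne

variable {b m n : ℕ}

theorem pos (hb : 0 < b) (hn : n ∈ leadingDigitOne b) : 0 < n := by
  obtain ⟨k, hk, -⟩ := hn
  exact (Nat.pow_pos hb).trans_le hk

theorem lt_two_mul_or_mul_lt_two_mul (hb : 0 < b) (hm : m ∈ leadingDigitOne b)
    (hn : n ∈ leadingDigitOne b) : m < 2 * n ∨ b * n < 2 * m := by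
  obtain ⟨j, hjm, hmj⟩ := hm
  obtain ⟨k, hkn, hnk⟩ := hn
  rcases le_or_gt j k with hjk | hkj
  · left
    calc m < 2 * b ^ j := hmj
      _ ≤ 2 * b ^ k := Nat.mul_le_mul_left 2 (Nat.pow_le_pow_right hb hjk)
      _ ≤ 2 * n := Nat.mul_le_mul_left 2 hkn
  · right
    calc b * n < b * (2 * b ^ k) := Nat.mul_lt_mul_of_pos_left hnk hb
      _ = 2 * b ^ (k + 1) := by ring
      _ ≤ 2 * b ^ j := Nat.mul_le_mul_left 2 (Nat.pow_le_pow_right hb hkj)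
      _ ≤ 2 * m := Nat.mul_le_mul_left 2 hjm

theorem ratioSet_subset (hb : 0 < b) :
    ratioSet (leadingDigitOne b) ⊆ Set.Iic 2 ∪ Set.Ici ((b : ℝ) / 2) := by
  rintro x ⟨m, hm, n, hn, rfl⟩
  have hn₀ : (0 : ℝ) < n := by exact_mod_cast pos hb hn
  rcases lt_two_mul_or_mul_lt_two_mul hb hm hn with h | h
  · left
    rw [Set.mem_Iic, div_le_iff₀ hn₀]
    exact_mod_cast h.le
  · right
    have h' : (b : ℝ) * n < 2 * m := by exact_mod_cast h
    rw [Set.mem_Ici, div_le_div_iff₀ two_pos hn₀]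
    linarith

end leadingDigitOne

theorem stmt1 (b : ℕ) (hb : 5 ≤ b) :
    ¬ (Set.Ici (0 : ℝ) ⊆
      closure (ratioSet {n : ℕ | ∃ k : ℕ, b ^ k ≤ n ∧ n < 2 * b ^ k})) := by
  intro hdense
  have hgap : (9 / 4 : ℝ) ∉ Set.Iic 2 ∪ Set.Ici ((b : ℝ) / 2) := by
    have : (5 : ℝ) ≤ b := by exact_mod_cast hb
    simp only [Set.mem_union, Set.mem_Iic, Set.mem_Ici, not_or, not_le]
    constructor <;> linarith
  have hclosed : IsClosed (Set.Iic (2 : ℝ) ∪ Set.Ici ((b : ℝ) / 2)) :=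
    isClosed_Iic.union isClosed_Ici
  exact hgap (hclosed.closure_subset_iff.2 (leadingDigitOne.ratioSet_subset (by omega))
    (hdense (by norm_num : (0 : ℝ) ≤ 9 / 4)))
end

section
/- Let 1 < a ≤ b be real numbers with b ≤ a², and let A = ∪_{k≥0} [b^k, a·b^k) ∩ ℕ. Then the quotient set R(A) = {m/n : m, n ∈ A} is dense in [0,∞). -/
/-! After scaling by `b ^ t`, the blocks `[b ^ (j + t), a b ^ (j + t))` and
`[b ^ (k + t), a b ^ (k + t))` become arbitrarily long, so quotients of their elements approximate
every point of `(b ^ j / (a b ^ k), a b ^ j / b ^ k)`. Because `b ≤ a ^ 2`, the closures of these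
intervals cover `(0, ∞)`, and `0` is a limit of positive reals. -/

open Set Filter

lemma abs_sub_floor_mul_div_lt {x : ℝ} (hx : 0 ≤ x) {n : ℕ} (hn : 0 < n) :
    |x - (⌊x * n⌋₊ : ℝ) / n| < 1 / n := by
  have hn' : (0 : ℝ) < n := Nat.cast_pos.mpr hn
  have h_le : (⌊x * n⌋₊ : ℝ) ≤ x * n := Nat.floor_le (by positivity)
  have h_lt : x * n < ⌊x * n⌋₊ + 1 := Nat.lt_floor_add_one _
  rw [abs_of_nonneg (by rw [sub_nonneg, div_le_iff₀ hn']; exact h_le), sub_lt_iff_lt_add,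
    ← add_div, lt_div_iff₀ hn']
  linarith

lemma eventually_exists_nat_div_near {p q r s x ε : ℝ} (hp : 0 < p) (hpq : p < q) (hr : 0 < r)
    (hrs : r < s) (hx : x ∈ Ioo (p / s) (q / r)) (hε : 0 < ε) :
    ∀ᶠ T in atTop, ∃ m n : ℕ, (m : ℝ) ∈ Ico (p * T) (q * T) ∧ (n : ℝ) ∈ Ico (r * T) (s * T) ∧
      |x - m / n| < ε := by
  obtain ⟨hxl, hxu⟩ := hx
  have hs : 0 < s := hr.trans hrs
  have hx0 : 0 < x := (div_pos hp hs).trans hxl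
  -- Take `n ∈ [lo T + 1 / x, hi T)`; then `m = ⌊x n⌋` lands in `[p T, q T)`.
  set lo := max r (p / x)
  set hi := min s (q / x)
  have hlo_hi : lo < hi := by
    have hrq : r < q / x := by
      rw [lt_div_iff₀ hx0, mul_comm]; exact (lt_div_iff₀ hr).mp hxu
    have hps : p / x < s := by
      rw [div_lt_iff₀ hx0, mul_comm]; exact (div_lt_iff₀ hs).mp hxl
    exact max_lt (lt_min hrs hrq) (lt_min hps (div_lt_div_of_pos_right hpq hx0))
  filter_upwards [eventually_gt_atTop ((1 + 1 / x) / (hi - lo)),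
    eventually_gt_atTop (1 / (r * ε))] with T hT_gap hT_ε
  have hT : 0 < T := lt_trans (by positivity) hT_ε
  have hgap : 1 + 1 / x < (hi - lo) * T := (div_lt_iff₀' (sub_pos.mpr hlo_hi)).mp hT_gap
  have hr_lo : r * T ≤ lo * T := mul_le_mul_of_nonneg_right (le_max_left _ _) hT.le
  have hp_lo : p ≤ x * lo := by
    rw [← div_le_iff₀' hx0]; exact le_max_right _ _
  have hhi_s : hi * T ≤ s * T := mul_le_mul_of_nonneg_right (min_le_left _ _) hT.le
  have hhi_q : x * hi ≤ q := by
    rw [← le_div_iff₀' hx0]; exact min_le_right _ _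
  set n := ⌈lo * T + 1 / x⌉₊
  have hn_ge : lo * T + 1 / x ≤ n := Nat.le_ceil _
  have hn_lt : (n : ℝ) < hi * T := by
    have := Nat.ceil_lt_add_one (show 0 ≤ lo * T + 1 / x by positivity)
    linarith
  have hrn : r * T ≤ n := hr_lo.trans (by linarith [one_div_pos.mpr hx0])
  have hn : 0 < n := Nat.cast_pos.mp ((mul_pos hr hT).trans_le hrn)
  have hxn_ge : p * T + 1 ≤ x * n := by
    calc p * T + 1 ≤ x * lo * T + x * (1 / x) := by
          rw [mul_one_div_cancel hx0.ne']; gcongr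
      _ = x * (lo * T + 1 / x) := by ring
      _ ≤ x * n := by gcongr
  have hxn_lt : x * n < q * T := by
    calc x * n < x * (hi * T) := by gcongr
      _ = x * hi * T := by ring
      _ ≤ q * T := by gcongr
  refine ⟨⌊x * n⌋₊, n, ⟨?_, ?_⟩, ⟨hrn, hn_lt.trans_le hhi_s⟩, ?_⟩
  · linarith [Nat.lt_floor_add_one (x * n)]
  · exact (Nat.floor_le (by positivity)).trans_lt hxn_lt
  · calc |x - ⌊x * n⌋₊ / n| < 1 / n := abs_sub_floor_mul_div_lt hx0.le hn
      _ ≤ 1 / (r * T) := one_div_le_one_div_of_le (by positivity) hrn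
      _ < ε := by
        rw [div_lt_iff₀ (by positivity)]
        rw [div_lt_iff₀ (by positivity)] at hT_ε
        linarith

lemma exists_pow_div_le_le_mul_pow_div {a b x : ℝ} (ha : 0 < a) (hb : 1 < b) (hba : b ≤ a ^ 2)
    (hx : 0 < x) : ∃ j k : ℕ, b ^ j / (a * b ^ k) ≤ x ∧ x ≤ a * b ^ j / b ^ k := by
  obtain ⟨k, hk⟩ := pow_unbounded_of_one_lt (1 / (a * x)) hb
  have hbk : 0 < b ^ k := pow_pos (zero_lt_one.trans hb) k
  have hy : 1 ≤ a * x * b ^ k := (le_of_lt ((div_lt_iff₀ (by positivity)).mp hk)).trans_eq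
    (by ring)
  obtain ⟨j, hj_le, hj_lt⟩ := exists_nat_pow_near hy hb
  refine ⟨j, k, ?_, ?_⟩
  · rw [div_le_iff₀ (by positivity)]; linarith
  · rw [le_div_iff₀ hbk]
    have : a * (x * b ^ k) < a * (a * b ^ j) := by
      calc a * (x * b ^ k) = a * x * b ^ k := by ring
        _ < b ^ j * b := by rwa [← pow_succ]
        _ ≤ b ^ j * a ^ 2 := by gcongr
        _ = a * (a * b ^ j) := by ring
    exact (lt_of_mul_lt_mul_left this ha.le).le

def geomBlockSet (a b : ℝ) : Set ℕ := {n : ℕ | ∃ k : ℕ, b ^ k ≤ (n : ℝ) ∧ (n : ℝ) < a * b ^ k}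

lemma Icc_subset_closure_ratioSet_geomBlockSet {a b : ℝ} (ha : 1 < a) (hb : 1 < b) (j k : ℕ) :
    Icc (b ^ j / (a * b ^ k)) (a * b ^ j / b ^ k) ⊆ closure (ratioSet (geomBlockSet a b)) := by
  have hb0 : 0 < b := zero_lt_one.trans hb
  have hIoo : Ioo (b ^ j / (a * b ^ k)) (a * b ^ j / b ^ k) ⊆
      closure (ratioSet (geomBlockSet a b)) := by
    intro x hx
    rw [Metric.mem_closure_iff]
    intro ε hε
    obtain ⟨t, m, n, hm, hn, hmn⟩ := ((tendsto_pow_atTop_atTop_of_one_lt hb).eventually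
      (eventually_exists_nat_div_near (pow_pos hb0 j) (lt_mul_left (pow_pos hb0 j) ha)
        (pow_pos hb0 k) (lt_mul_left (pow_pos hb0 k) ha) hx hε)).exists
    refine ⟨m / n, ⟨m, ⟨j + t, ?_⟩, n, ⟨k + t, ?_⟩, rfl⟩, by rwa [Real.dist_eq]⟩
    · simpa only [pow_add, mul_assoc, mem_Ico] using hm
    · simpa only [pow_add, mul_assoc, mem_Ico] using hn
  have hlt : b ^ j / (a * b ^ k) < a * b ^ j / b ^ k := by
    rw [div_lt_div_iff₀ (by positivity) (pow_pos hb0 k)]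
    have hjk := mul_pos (pow_pos hb0 j) (pow_pos hb0 k)
    nlinarith [mul_lt_mul_of_pos_right (one_lt_mul ha.le ha) hjk]
  rw [← closure_Ioo hlt.ne]
  exact closure_minimal hIoo isClosed_closure

theorem stmt2 (a b : ℝ) (ha : 1 < a) (hab : a ≤ b) (hba : b ≤ a ^ 2) :
    Set.Ici (0 : ℝ) ⊆
      closure (ratioSet {n : ℕ | ∃ k : ℕ, b ^ k ≤ (n : ℝ) ∧ (n : ℝ) < a * b ^ k}) := by
  have hb : 1 < b := ha.trans_le hab
  have hpos : Ioi (0 : ℝ) ⊆ closure (ratioSet (geomBlockSet a b)) := fun x hx => by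
    obtain ⟨j, k, hx⟩ := exists_pow_div_le_le_mul_pow_div (zero_lt_one.trans ha) hb hba hx
    exact Icc_subset_closure_ratioSet_geomBlockSet ha hb j k hx
  rw [← closure_Ioi]
  exact closure_minimal hpos isClosed_closure
end

section
/- Let 1 < a ≤ b be real numbers with a² < b, and let A = ∪_{k≥0} [b^k, a·b^k) ∩ ℕ. Then R(A) is not dense in [0,∞); in fact every quotient of elements of A lies in an interval (b^ℓ/a, a·b^ℓ) for some integer ℓ, and for each integer ℓ the nonempty interval [a·b^ℓ, b^{ℓ+1}/a] contains no element of R(A). -/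
/-!
A quotient of an element of `[bᵏ, a bᵏ)` by one of `[bʲ, a bʲ)` lies in `(bˡ / a, a bˡ)` with
`l = k - j`. Since `a² ≤ b`, consecutive such intervals leave the gaps `[a bˡ, bˡ⁺¹ / a]` free of
quotients, and the strict inequality `a² < b` gives the gap at `l = 0` nonempty interior.
-/

open Set

def powerBlocks (a b : ℝ) : Set ℕ := {n : ℕ | ∃ k : ℕ, b ^ k ≤ (n : ℝ) ∧ (n : ℝ) < a * b ^ k}

lemma div_mem_Ioo_of_mem_Ico {a p q m n : ℝ} (hp : 0 < p) (hq : 0 < q)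
    (hm : m ∈ Ico p (a * p)) (hn : n ∈ Ico q (a * q)) :
    m / n ∈ Ioo (p / (a * q)) (a * p / q) := by
  have hn0 : 0 < n := hq.trans_le hn.1
  have ha : 0 < a := pos_of_mul_pos_left (hq.trans_le (hn.1.trans hn.2.le)) hq.le
  constructor
  · rw [div_lt_div_iff₀ (by positivity) hn0]
    nlinarith [hm.1, hn.2]
  · rw [div_lt_div_iff₀ hn0 hq]
    nlinarith [mul_lt_mul_of_pos_right hm.2 hq, mul_le_mul_of_nonneg_left hn.1 (mul_pos ha hp).le]

lemma exists_zpow_of_mem_ratioSet_powerBlocks {a b x : ℝ} (hb : 0 < b)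
    (hx : x ∈ ratioSet (powerBlocks a b)) : ∃ l : ℤ, x ∈ Ioo (b ^ l / a) (a * b ^ l) := by
  obtain ⟨m, ⟨k, hkm, hmk⟩, n, ⟨j, hjn, hnj⟩, rfl⟩ := hx
  refine ⟨(k : ℤ) - j, ?_⟩
  have hkj : b ^ ((k : ℤ) - j) = b ^ k / b ^ j := by
    rw [zpow_sub₀ hb.ne', zpow_natCast, zpow_natCast]
  have h := div_mem_Ioo_of_mem_Ico (pow_pos hb k) (pow_pos hb j) ⟨hkm, hmk⟩ ⟨hjn, hnj⟩
  rw [hkj]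
  convert h using 2 <;> ring

lemma Icc_zpow_nonempty {a b : ℝ} (ha : 0 < a) (hb : 0 < b) (hab : a ^ 2 ≤ b) (l : ℤ) :
    (Icc (a * b ^ l) (b ^ (l + 1) / a)).Nonempty := by
  refine nonempty_Icc.2 ?_
  rw [le_div_iff₀ ha, zpow_add_one₀ hb.ne']
  nlinarith [zpow_pos hb l]

lemma Icc_zpow_disjoint_Ioo_zpow {a b : ℝ} (ha : 0 < a) (hb : 1 ≤ b) (l m : ℤ) :
    Disjoint (Icc (a * b ^ l) (b ^ (l + 1) / a)) (Ioo (b ^ m / a) (a * b ^ m)) := by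
  refine disjoint_left.2 fun x ⟨hlx, hxl⟩ ⟨hmx, hxm⟩ => ?_
  rcases le_or_gt m l with hml | hlm
  · have := mul_le_mul_of_nonneg_left (zpow_le_zpow_right₀ hb hml) ha.le
    linarith
  · have := div_le_div_of_nonneg_right (zpow_le_zpow_right₀ hb hlm) ha.le
    linarith

lemma ratioSet_powerBlocks_inter_Icc_zpow {a b : ℝ} (ha : 0 < a) (hb : 1 ≤ b) (l : ℤ) :
    ratioSet (powerBlocks a b) ∩ Icc (a * b ^ l) (b ^ (l + 1) / a) = ∅ := by
  refine eq_empty_of_forall_notMem fun x ⟨hx, hxl⟩ => ?_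
  obtain ⟨m, hxm⟩ := exists_zpow_of_mem_ratioSet_powerBlocks (by linarith) hx
  exact disjoint_left.1 (Icc_zpow_disjoint_Ioo_zpow ha hb l m) hxl hxm

lemma not_Ici_subset_closure_of_inter_Icc_eq_empty {s : Set ℝ} {u v : ℝ} (hu : 0 ≤ u)
    (huv : u < v) (h : s ∩ Icc u v = ∅) : ¬ Ici 0 ⊆ closure s := by
  intro hs
  obtain ⟨x, hux, hxv⟩ := exists_between huv
  have hgap : Disjoint (Ioo u v) s :=
    disjoint_left.2 fun y hy hys => (eq_empty_iff_forall_notMem.1 h) y ⟨hys, Ioo_subset_Icc_self hy⟩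
  exact disjoint_left.1 (hgap.closure_right isOpen_Ioo) ⟨hux, hxv⟩ (hs (hu.trans hux.le))

theorem stmt3_general (a b : ℝ) (ha : 1 < a) (hba : a ^ 2 < b) :
    (∀ x ∈ ratioSet {n : ℕ | ∃ k : ℕ, b ^ k ≤ (n : ℝ) ∧ (n : ℝ) < a * b ^ k},
        ∃ l : ℤ, x ∈ Set.Ioo (b ^ l / a) (a * b ^ l)) ∧
    (∀ l : ℤ, (Set.Icc (a * b ^ l) (b ^ (l + 1) / a)).Nonempty ∧
        ratioSet {n : ℕ | ∃ k : ℕ, b ^ k ≤ (n : ℝ) ∧ (n : ℝ) < a * b ^ k} ∩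
          Set.Icc (a * b ^ l) (b ^ (l + 1) / a) = ∅) ∧
    ¬ (Set.Ici (0 : ℝ) ⊆
        closure (ratioSet {n : ℕ | ∃ k : ℕ, b ^ k ≤ (n : ℝ) ∧ (n : ℝ) < a * b ^ k})) := by
  have ha0 : 0 < a := one_pos.trans ha
  have hb1 : 1 < b := (one_lt_pow₀ ha two_ne_zero).trans hba
  have hb0 : 0 < b := one_pos.trans hb1
  have hgap := ratioSet_powerBlocks_inter_Icc_zpow ha0 hb1.le
  refine ⟨fun x => exists_zpow_of_mem_ratioSet_powerBlocks hb0,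
    fun l => ⟨Icc_zpow_nonempty ha0 hb0 hba.le l, hgap l⟩, ?_⟩
  have hsep : a < b / a := by
    rw [lt_div_iff₀ ha0]
    nlinarith
  have hgap0 := hgap 0
  rw [zpow_zero, mul_one, zero_add, zpow_one] at hgap0
  exact not_Ici_subset_closure_of_inter_Icc_eq_empty ha0.le hsep hgap0

theorem stmt3 (a b : ℝ) (ha : 1 < a) (hab : a ≤ b) (hba : a ^ 2 < b) :
    (∀ x ∈ ratioSet {n : ℕ | ∃ k : ℕ, b ^ k ≤ (n : ℝ) ∧ (n : ℝ) < a * b ^ k},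
        ∃ l : ℤ, x ∈ Set.Ioo (b ^ l / a) (a * b ^ l)) ∧
    (∀ l : ℤ, (Set.Icc (a * b ^ l) (b ^ (l + 1) / a)).Nonempty ∧
        ratioSet {n : ℕ | ∃ k : ℕ, b ^ k ≤ (n : ℝ) ∧ (n : ℝ) < a * b ^ k} ∩
          Set.Icc (a * b ^ l) (b ^ (l + 1) / a) = ∅) ∧
    ¬ (Set.Ici (0 : ℝ) ⊆
        closure (ratioSet {n : ℕ | ∃ k : ℕ, b ^ k ≤ (n : ℝ) ∧ (n : ℝ) < a * b ^ k})) :=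
  stmt3_general a b ha hba
end

section
/- Let 1 < a ≤ b be real numbers and A = ∪_{k≥0} [b^k, a·b^k) ∩ ℕ. Then the lower asymptotic density of A equals (a−1)/(b−1), i.e., liminf_{n→∞} |A ∩ [1,n]|/n = (a−1)/(b−1). -/
/-!
The set is the disjoint union of the blocks `[b^k, a b^k)`, the `k`-th of which has
`(a - 1) b^k + O(1)` elements, so the blocks below `b^K` contribute
`c (b^K - 1) + O(K)` elements, where `c = (a - 1)/(b - 1)`. Hence the counting function is
at least `c n - O(log n)` for every `n`, while just below `b^K`, at the end of a gap, it is
at most `c b^K + O(K)`: the ratio never falls much below `c` and comes back close to `c`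
infinitely often.
-/

open Filter Finset

lemma card_inter_Icc_le (A : Set ℕ) (n : ℕ) : Nat.card ↥(A ∩ Set.Icc 1 n) ≤ n :=
  (Nat.card_mono (Set.finite_Icc 1 n) Set.inter_subset_right).trans_eq (by simp)

lemma isBoundedUnder_le_card_inter_Icc_div (A : Set ℕ) :
    IsBoundedUnder (· ≤ ·) atTop fun n : ℕ => (Nat.card ↥(A ∩ Set.Icc 1 n) : ℝ) / n :=
  isBoundedUnder_of
    ⟨1, fun n => div_le_one_of_le₀ (mod_cast card_inter_Icc_le A n) n.cast_nonneg⟩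

lemma isBoundedUnder_ge_card_inter_Icc_div (A : Set ℕ) :
    IsBoundedUnder (· ≥ ·) atTop fun n : ℕ => (Nat.card ↥(A ∩ Set.Icc 1 n) : ℝ) / n :=
  isBoundedUnder_of ⟨0, fun _ => by positivity⟩

lemma le_lowerDensity_of_eventually {A : Set ℕ} {c : ℝ}
    (h : ∀ ε > 0, ∀ᶠ n : ℕ in atTop, (c - ε) * n ≤ Nat.card ↥(A ∩ Set.Icc 1 n)) :
    c ≤ lowerDensity A := by
  refine le_of_forall_pos_le_add fun ε hε => sub_le_iff_le_add.1 ?_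
  refine le_liminf_of_le (isBoundedUnder_le_card_inter_Icc_div A).isCoboundedUnder_ge ?_
  filter_upwards [h ε hε, eventually_ge_atTop 1] with n hn hn1
  exact (le_div_iff₀ (by exact_mod_cast hn1)).2 hn

lemma lowerDensity_le_of_frequently {A : Set ℕ} {c : ℝ}
    (h : ∀ ε > 0, ∃ᶠ n : ℕ in atTop,
      (Nat.card ↥(A ∩ Set.Icc 1 n) : ℝ) ≤ (c + ε) * n) :
    lowerDensity A ≤ c := by
  refine le_of_forall_pos_le_add fun ε hε => ?_
  refine liminf_le_of_frequently_le ?_ (isBoundedUnder_ge_card_inter_Icc_div A)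
  refine ((h ε hε).and_eventually (eventually_ge_atTop 1)).mono fun n ⟨hn, hn1⟩ => ?_
  exact (div_le_iff₀ (by exact_mod_cast hn1)).2 hn

lemma sub_sub_one_le_card_Ico_ceil {x : ℝ} (hx : 0 ≤ x) (m : ℕ) :
    (m : ℝ) - x - 1 ≤ #(Ico ⌈x⌉₊ m) := by
  have hm : (m : ℝ) ≤ ((m - ⌈x⌉₊ : ℕ) : ℝ) + ⌈x⌉₊ := mod_cast le_tsub_add
  rw [Nat.card_Ico]
  linarith [Nat.ceil_lt_add_one hx]

lemma card_Ico_ceil_le {x y : ℝ} (hx : 0 ≤ x) (hxy : x ≤ y) :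
    (#(Ico ⌈x⌉₊ ⌈y⌉₊) : ℝ) ≤ y - x + 1 := by
  rw [Nat.card_Ico, Nat.cast_sub (Nat.ceil_le_ceil hxy)]
  linarith [Nat.ceil_lt_add_one (hx.trans hxy), Nat.le_ceil x]

section GeomBlocks

variable {a b : ℝ}

def geomBlocks (a b : ℝ) : Set ℕ :=
  {n : ℕ | ∃ k : ℕ, b ^ k ≤ (n : ℝ) ∧ (n : ℝ) < a * b ^ k}

noncomputable def geomBlock (a b : ℝ) (k : ℕ) : Finset ℕ :=
  Ico ⌈b ^ k⌉₊ ⌈a * b ^ k⌉₊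

lemma mem_geomBlock {k m : ℕ} :
    m ∈ geomBlock a b k ↔ b ^ k ≤ (m : ℝ) ∧ (m : ℝ) < a * b ^ k := by
  simp [geomBlock, Nat.ceil_le, Nat.lt_ceil]

lemma mul_pow_le_pow_succ (hab : a ≤ b) (hb : 0 ≤ b) (k : ℕ) : a * b ^ k ≤ b ^ (k + 1) := by
  rw [pow_succ']
  exact mul_le_mul_of_nonneg_right hab (pow_nonneg hb k)

lemma pairwise_disjoint_geomBlock (hab : a ≤ b) (hb : 1 ≤ b) :
    Pairwise (Function.onFun Disjoint (geomBlock a b)) := by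
  refine (pairwise_disjoint_on _).2 fun k l hkl => disjoint_left.2 fun m hk hl => ?_
  have hmk := (mem_geomBlock.1 hk).2.trans_le (mul_pow_le_pow_succ hab (by linarith) k)
  have hlm : b ^ (k + 1) ≤ m := (pow_le_pow_right₀ hb hkl).trans (mem_geomBlock.1 hl).1
  linarith

lemma card_geomBlock_le (ha : 1 ≤ a) (hb : 0 ≤ b) (k : ℕ) :
    (#(geomBlock a b k) : ℝ) ≤ (a - 1) * b ^ k + 1 := by
  have hbk := pow_nonneg hb k
  have := card_Ico_ceil_le hbk (le_mul_of_one_le_left hbk ha)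
  unfold geomBlock
  linarith

lemma le_card_geomBlock (hb : 0 ≤ b) (k : ℕ) : (a - 1) * b ^ k - 1 ≤ #(geomBlock a b k) := by
  have := sub_sub_one_le_card_Ico_ceil (pow_nonneg hb k) ⌈a * b ^ k⌉₊
  unfold geomBlock
  linarith [Nat.le_ceil (a * b ^ k)]

lemma geomBlock_subset_Icc (hb : 1 ≤ b) {k n : ℕ} (h : a * b ^ k ≤ n) :
    geomBlock a b k ⊆ Icc 1 n := by
  intro m hm
  obtain ⟨hkm, hmk⟩ := mem_geomBlock.1 hm
  have h1 : (1 : ℝ) ≤ m := (one_le_pow₀ hb).trans hkm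
  have h2 : (m : ℝ) ≤ n := hmk.le.trans h
  exact mem_Icc.2 ⟨by exact_mod_cast h1, by exact_mod_cast h2⟩

lemma Ico_min_subset_geomBlock_inter_Icc (hb : 0 < b) (k n : ℕ) :
    Ico ⌈b ^ k⌉₊ (min ⌈a * b ^ k⌉₊ (n + 1)) ⊆ geomBlock a b k ∩ Icc 1 n := by
  have h1 : 1 ≤ ⌈b ^ k⌉₊ := Nat.one_le_ceil_iff.2 (pow_pos hb k)
  intro m hm
  simp only [mem_Ico, lt_min_iff] at hm
  simp only [geomBlock, mem_inter, mem_Ico, mem_Icc]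
  omega

lemma min_sub_sub_one_le_card_geomBlock_inter_Icc (hb : 0 < b) (k n : ℕ) :
    min (a * b ^ k) (n + 1) - b ^ k - 1 ≤ #(geomBlock a b k ∩ Icc 1 n) := by
  have hmin : min (a * b ^ k) (n + 1) ≤ ((min ⌈a * b ^ k⌉₊ (n + 1) : ℕ) : ℝ) := by
    push_cast
    exact min_le_min_right _ (Nat.le_ceil _)
  have hsub : (#(Ico ⌈b ^ k⌉₊ (min ⌈a * b ^ k⌉₊ (n + 1))) : ℝ) ≤
      #(geomBlock a b k ∩ Icc 1 n) :=
    mod_cast card_le_card (Ico_min_subset_geomBlock_inter_Icc hb k n)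
  linarith [sub_sub_one_le_card_Ico_ceil (pow_pos hb k).le (min ⌈a * b ^ k⌉₊ (n + 1))]

lemma geomBlocks_inter_Icc (hb : 1 < b) {n K : ℕ} (hn : (n : ℝ) < b ^ K) :
    geomBlocks a b ∩ Set.Icc 1 n =
      ↑((range K).biUnion fun k => geomBlock a b k ∩ Icc 1 n) := by
  ext m
  simp only [geomBlocks, Set.mem_inter_iff, Set.mem_ofPred_eq, Set.mem_Icc, coe_biUnion,
    mem_coe, mem_range, mem_inter, mem_Icc, Set.mem_iUnion, mem_geomBlock, exists_prop]
  constructor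
  · rintro ⟨⟨k, hkm, hmk⟩, hm⟩
    have hkK : b ^ k < b ^ K := hkm.trans_lt ((Nat.cast_le.2 hm.2).trans_lt hn)
    exact ⟨k, (pow_lt_pow_iff_right₀ hb).1 hkK, ⟨hkm, hmk⟩, hm⟩
  · rintro ⟨k, -, hk, hm⟩
    exact ⟨⟨k, hk⟩, hm⟩

lemma card_geomBlocks_inter_Icc (hab : a ≤ b) (hb : 1 < b) {n K : ℕ} (hn : (n : ℝ) < b ^ K) :
    Nat.card ↥(geomBlocks a b ∩ Set.Icc 1 n) =
      ∑ k ∈ range K, #(geomBlock a b k ∩ Icc 1 n) := by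
  rw [geomBlocks_inter_Icc hb hn, Nat.card_coe_set_eq, Set.ncard_coe_finset,
    card_biUnion]
  exact fun k _ l _ hkl => (pairwise_disjoint_geomBlock hab hb.le hkl).mono
    inter_subset_left inter_subset_left

lemma sum_sub_one_mul_pow (hb : b ≠ 1) (K : ℕ) :
    ∑ k ∈ range K, (a - 1) * b ^ k = (a - 1) / (b - 1) * (b ^ K - 1) := by
  rw [← mul_sum, geom_sum_eq hb, mul_div_assoc']
  ring

lemma card_geomBlocks_inter_Icc_le (ha : 1 ≤ a) (hab : a ≤ b) (hb : 1 < b) {n K : ℕ}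
    (hn : (n : ℝ) < b ^ K) :
    (Nat.card ↥(geomBlocks a b ∩ Set.Icc 1 n) : ℝ) ≤ (a - 1) / (b - 1) * b ^ K + K := by
  have hc : 0 ≤ (a - 1) / (b - 1) := div_nonneg (by linarith) (by linarith)
  rw [card_geomBlocks_inter_Icc hab hb hn]
  push_cast
  calc ∑ k ∈ range K, (#(geomBlock a b k ∩ Icc 1 n) : ℝ)
      ≤ ∑ k ∈ range K, ((a - 1) * b ^ k + 1) := by
        refine sum_le_sum fun k _ => le_trans ?_ (card_geomBlock_le ha (by linarith) k)
        exact_mod_cast card_le_card inter_subset_left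
    _ = (a - 1) / (b - 1) * (b ^ K - 1) + K := by
        simp [sum_add_distrib, sum_sub_one_mul_pow hb.ne']
    _ ≤ (a - 1) / (b - 1) * b ^ K + K := by linarith

lemma le_card_geomBlocks_inter_Icc (ha : 1 ≤ a) (hab : a ≤ b) (hb : 1 < b) {n K : ℕ}
    (hKn : b ^ K ≤ (n : ℝ)) (hnK : (n : ℝ) < b ^ (K + 1)) :
    (a - 1) / (b - 1) * n - (K + 2) ≤ (Nat.card ↥(geomBlocks a b ∩ Set.Icc 1 n) : ℝ) := by
  set c := (a - 1) / (b - 1)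
  have hc0 : 0 ≤ c := div_nonneg (by linarith) (by linarith)
  have hc1 : c ≤ 1 := (div_le_one (by linarith)).2 (by linarith)
  have hcb : c * (b - 1) = a - 1 := div_mul_cancel₀ _ (by linarith)
  have hfull : ∀ k ∈ range K, geomBlock a b k ∩ Icc 1 n = geomBlock a b k := fun k hk =>
    inter_eq_left.2 <| geomBlock_subset_Icc hb.le <|
      (mul_pow_le_pow_succ hab (by linarith) k).trans <|
        (pow_le_pow_right₀ hb.le (mem_range.1 hk)).trans hKn
  have hlow : c * (b ^ K - 1) - K ≤ ∑ k ∈ range K, (#(geomBlock a b k) : ℝ) := by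
    calc c * (b ^ K - 1) - K = ∑ k ∈ range K, ((a - 1) * b ^ k - 1) := by
          simp [sum_sub_distrib, sum_sub_one_mul_pow hb.ne', c]
      _ ≤ _ := sum_le_sum fun k _ => le_card_geomBlock (by linarith) k
  have htop := min_sub_sub_one_le_card_geomBlock_inter_Icc (a := a) (b := b) (by linarith) K n
  rw [card_geomBlocks_inter_Icc hab hb hnK, sum_range_succ]
  push_cast
  rw [sum_congr rfl fun k hk => congrArg (fun s : Finset ℕ => (#s : ℝ)) (hfull k hk)]
  rcases min_cases (a * b ^ K) ((n : ℝ) + 1) with ⟨hmin, -⟩ | ⟨hmin, -⟩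
  · -- a full top block: the count is at least `c b^(K+1) - c - K - 1`
    have : c * n ≤ c * b ^ (K + 1) := mul_le_mul_of_nonneg_left hnK.le hc0
    have : c * b ^ (K + 1) = c * b ^ K + (a - 1) * b ^ K := by rw [← hcb, pow_succ]; ring
    linarith
  · -- a partial top block: the count is at least `c n + (1 - c) (n - b^K) - c - K`
    have : 0 ≤ (1 - c) * (n - b ^ K) := mul_nonneg (by linarith) (by linarith)
    linarith

lemma tendsto_add_const_div_pow (hb : 1 < b) (C : ℝ) :
    Tendsto (fun k : ℕ => ((k : ℝ) + C) / b ^ k) atTop (nhds 0) := by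
  have hlin := tendsto_pow_const_div_const_pow_of_one_lt 1 hb
  have hconst : Tendsto (fun k : ℕ => C * (b⁻¹) ^ k) atTop (nhds 0) := by
    simpa using (tendsto_pow_atTop_nhds_zero_of_lt_one (by positivity)
      (inv_lt_one_of_one_lt₀ hb)).const_mul C
  simpa [add_mul, div_eq_mul_inv] using hlin.add hconst

lemma eventually_le_card_geomBlocks_inter_Icc (ha : 1 ≤ a) (hab : a ≤ b) (hb : 1 < b) :
    ∀ ε > 0, ∀ᶠ n : ℕ in atTop,
      ((a - 1) / (b - 1) - ε) * n ≤ Nat.card ↥(geomBlocks a b ∩ Set.Icc 1 n) := by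
  intro ε hε
  obtain ⟨K₀, hK₀⟩ := eventually_atTop.1 ((tendsto_add_const_div_pow hb 2).eventually
    (gt_mem_nhds hε))
  filter_upwards [eventually_ge_atTop ⌈b ^ K₀⌉₊] with n hn
  have hK₀n : b ^ K₀ ≤ (n : ℝ) := Nat.ceil_le.1 hn
  obtain ⟨K, hKn, hnK⟩ := exists_nat_pow_near ((one_le_pow₀ hb.le).trans hK₀n) hb
  have hK₀K : K₀ ≤ K :=
    Nat.lt_succ_iff.1 ((pow_lt_pow_iff_right₀ hb).1 (hK₀n.trans_lt hnK))
  have hKε : (K : ℝ) + 2 ≤ ε * n :=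
    (((div_lt_iff₀ (pow_pos (by linarith) K)).1 (hK₀ K hK₀K)).trans_le
      (mul_le_mul_of_nonneg_left hKn hε.le)).le
  linarith [le_card_geomBlocks_inter_Icc ha hab hb hKn hnK]

lemma frequently_card_geomBlocks_inter_Icc_le (ha : 1 ≤ a) (hab : a ≤ b) (hb : 1 < b) :
    ∀ ε > 0, ∃ᶠ n : ℕ in atTop,
      (Nat.card ↥(geomBlocks a b ∩ Set.Icc 1 n) : ℝ) ≤ ((a - 1) / (b - 1) + ε) * n := by
  intro ε hε
  set c := (a - 1) / (b - 1)
  have hc0 : 0 ≤ c := div_nonneg (by linarith) (by linarith)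
  refine frequently_atTop.2 fun M => ?_
  obtain ⟨K, hKε, hKM⟩ := (((tendsto_add_const_div_pow hb (c + ε)).eventually
    (gt_mem_nhds hε)).and ((tendsto_pow_atTop_atTop_of_one_lt hb).eventually_gt_atTop
    ((M : ℝ) + 1))).exists
  -- the last integer `n` below `b^K`
  have hceil : 1 ≤ ⌈b ^ K⌉₊ := Nat.one_le_ceil_iff.2 (by linarith)
  set n := ⌈b ^ K⌉₊ - 1
  have hn : (n : ℝ) = ⌈b ^ K⌉₊ - 1 := by simp [n, Nat.cast_sub hceil]
  have hnK : (n : ℝ) < b ^ K := by linarith [Nat.ceil_lt_add_one (by linarith : 0 ≤ b ^ K)]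
  have hKn : b ^ K - 1 ≤ n := by linarith [Nat.le_ceil (b ^ K)]
  refine ⟨n, by exact_mod_cast (by linarith : (M : ℝ) ≤ n), ?_⟩
  have hKε' := (div_lt_iff₀ (pow_pos (by linarith) K)).1 hKε
  calc (Nat.card ↥(geomBlocks a b ∩ Set.Icc 1 n) : ℝ) ≤ c * b ^ K + K :=
        card_geomBlocks_inter_Icc_le ha hab hb hnK
    _ ≤ (c + ε) * (b ^ K - 1) := by linarith
    _ ≤ (c + ε) * n := mul_le_mul_of_nonneg_left hKn (by linarith)

end GeomBlocks

theorem stmt4 (a b : ℝ) (ha : 1 < a) (hab : a ≤ b) :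
    lowerDensity {n : ℕ | ∃ k : ℕ, b ^ k ≤ (n : ℝ) ∧ (n : ℝ) < a * b ^ k} =
      (a - 1) / (b - 1) := by
  have hb : 1 < b := ha.trans_le hab
  show lowerDensity (geomBlocks a b) = _
  exact le_antisymm
    (lowerDensity_le_of_frequently (frequently_card_geomBlocks_inter_Icc_le ha.le hab hb))
    (le_lowerDensity_of_eventually (eventually_le_card_geomBlocks_inter_Icc ha.le hab hb))
end

section
/- If A ⊆ ℕ has lower asymptotic density d(A) ≥ 1/2, then R(A) = {a/a' : a, a' ∈ A} is dense in [0,∞). -/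
open Filter Finset

open Classical in
noncomputable def initSegment (A : Set ℕ) (n : ℕ) : Finset ℕ := {m ∈ Icc 1 n | m ∈ A}

lemma mem_initSegment {A : Set ℕ} {n m : ℕ} : m ∈ initSegment A n ↔ m ∈ A ∧ 1 ≤ m ∧ m ≤ n := by
  classical
  simp only [initSegment, mem_filter, mem_Icc]
  tauto

lemma lowerDensity_eq_liminf (A : Set ℕ) :
    lowerDensity A = liminf (fun n : ℕ => (#(initSegment A n) : ℝ) / n) atTop := by
  have hA (n : ℕ) : A ∩ Set.Icc 1 n = ↑(initSegment A n) := by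
    ext m
    simp [mem_initSegment]
  simp only [lowerDensity, hA, Nat.card_coe_set_eq, Set.ncard_coe_finset]

lemma eventually_mul_le_card_initSegment {A : Set ℕ} {δ : ℝ} (hδ : δ < lowerDensity A) :
    ∀ᶠ n : ℕ in atTop, δ * n ≤ #(initSegment A n) := by
  rw [lowerDensity_eq_liminf] at hδ
  have hbdd : IsBoundedUnder (· ≥ ·) atTop (fun n : ℕ => (#(initSegment A n) : ℝ) / n) :=
    isBoundedUnder_of_eventually_ge (Eventually.of_forall fun n => by positivity)
  filter_upwards [eventually_lt_of_lt_liminf hδ hbdd, eventually_gt_atTop 0] with n hn hn0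
  exact ((lt_div_iff₀ (Nat.cast_pos.mpr hn0)).mp hn).le

lemma infinite_of_eventually_mul_le_card_initSegment {A : Set ℕ} {δ : ℝ} (hδ : 0 < δ)
    (hlow : ∀ᶠ n : ℕ in atTop, δ * n ≤ #(initSegment A n)) : A.Infinite := by
  intro hfin
  have hbound (n : ℕ) : #(initSegment A n) ≤ #hfin.toFinset :=
    card_le_card fun m hm => hfin.mem_toFinset.mpr (mem_initSegment.mp hm).1
  obtain ⟨n, hn, hgt⟩ := (hlow.and (eventually_gt_atTop ⌈#hfin.toFinset / δ⌉₊)).exists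
  have hlt : (#hfin.toFinset : ℝ) < δ * n := by
    rw [← div_lt_iff₀' hδ]
    exact Nat.lt_of_ceil_lt hgt
  exact absurd (hn.trans (Nat.cast_le.mpr (hbound n))) hlt.not_ge

def cell (u a : ℕ) : Finset ℕ := Ico (u * (a - 1)) (u * a)

lemma card_cell (u : ℕ) {a : ℕ} (ha : 0 < a) : #(cell u a) = u := by
  obtain ⟨a, rfl⟩ := Nat.exists_eq_add_of_lt ha
  simp [cell, mul_add]

lemma pairwiseDisjoint_cell (u : ℕ) (S : Set ℕ) : S.PairwiseDisjoint (cell u) := by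
  intro a _ b _ hab
  rw [Function.onFun, ← disjoint_coe, cell, cell, coe_Ico, coe_Ico, Set.Ico_disjoint_Ico]
  rcases hab.lt_or_gt with h | h
  · have : u * a ≤ u * (b - 1) := Nat.mul_le_mul_left u (by omega)
    omega
  · have : u * b ≤ u * (a - 1) := Nat.mul_le_mul_left u (by omega)
    omega

lemma mul_card_add_mul_card_le {S T : Finset ℕ} {u v L : ℕ} (hS : ∀ a ∈ S, 0 < a ∧ u * a ≤ L)
    (hT : ∀ b ∈ T, 0 < b ∧ v * b ≤ L) (hST : ∀ a ∈ S, ∀ b ∈ T, Disjoint (cell u a) (cell v b)) :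
    u * #S + v * #T ≤ L := by
  have hcard {w : ℕ} {S : Finset ℕ} (hS : ∀ a ∈ S, 0 < a ∧ w * a ≤ L) :
      #(S.biUnion (cell w)) = w * #S := by
    rw [card_biUnion (pairwiseDisjoint_cell w _), sum_congr rfl fun a ha => card_cell w (hS a ha).1,
      sum_const, smul_eq_mul, mul_comm]
  have hsub {w : ℕ} {S : Finset ℕ} (hS : ∀ a ∈ S, 0 < a ∧ w * a ≤ L) :
      S.biUnion (cell w) ⊆ range L := by
    intro k hk
    obtain ⟨a, ha, hk⟩ := mem_biUnion.mp hk
    exact mem_range.mpr ((mem_Ico.mp hk).2.trans_le (hS a ha).2)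
  have hdisj : Disjoint (S.biUnion (cell u)) (T.biUnion (cell v)) :=
    (disjoint_biUnion_left _ _ _).mpr fun a ha =>
      (disjoint_biUnion_right _ _ _).mpr fun b hb => hST a ha b hb
  rw [← hcard hS, ← hcard hT, ← card_union_of_disjoint hdisj, ← card_range L]
  exact card_le_card (union_subset (hsub hS) (hsub hT))

lemma div_mem_Ioo_of_not_disjoint_cell {u v a b : ℕ} (hv : 0 < v) (ha : 0 < a)
    (h : ¬ Disjoint (cell u a) (cell v b)) :
    (b / a : ℝ) ∈ Set.Ioo ((u / v : ℝ) * (1 - 1 / a)) (u / v + 1 / a) := by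
  obtain ⟨k, hka, hkb⟩ := not_disjoint_iff.mp h
  rw [cell, mem_Ico] at hka hkb
  have hv' : (0 : ℝ) < v := by exact_mod_cast hv
  have ha' : (0 : ℝ) < a := by exact_mod_cast ha
  have hba : (b / a : ℝ) = v * b / (v * a) := by field_simp
  constructor
  · have hlt : (u : ℝ) * (a - 1) < v * b := by
      have : u * (a - 1) < v * b := by omega
      rw [← Nat.cast_pred ha]
      exact_mod_cast this
    rw [hba, show (u / v : ℝ) * (1 - 1 / a) = u * (a - 1) / (v * a) by field_simp]
    exact div_lt_div_of_pos_right hlt (by positivity)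
  · have hlt : (v : ℝ) * b < u * a + v := by
      have : v * b < u * a + v := by
        cases b with
        | zero => omega
        | succ b => simp only [Nat.add_sub_cancel, mul_add, mul_one] at hkb ⊢; omega
      exact_mod_cast this
    rw [hba, show (u / v : ℝ) + 1 / a = (u * a + v) / (v * a) by field_simp]
    exact div_lt_div_of_pos_right hlt (by positivity)

lemma card_initSegment_le_card_filter_add (A : Set ℕ) (n A₀ : ℕ) :
    #(initSegment A n) ≤ #{a ∈ initSegment A n | A₀ ≤ a} + A₀ := by
  rw [← card_filter_add_card_filter_not (fun a => A₀ ≤ a) (s := initSegment A n)]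
  gcongr
  calc #{a ∈ initSegment A n | ¬A₀ ≤ a} ≤ #(range A₀) :=
        card_le_card fun a ha => mem_range.mpr (not_le.mp (mem_filter.mp ha).2)
    _ = A₀ := card_range A₀

lemma mul_card_initSegment_add_le {A : Set ℕ} {u v A₀ : ℕ}
    (hdisj : ∀ a ≥ A₀, a ∈ A → ∀ b ∈ A, Disjoint (cell u a) (cell v b)) (n : ℕ) :
    u * #(initSegment A n) + v * #(initSegment A (u * n / v)) ≤ u * n + u * A₀ := by
  have hpack : u * #{a ∈ initSegment A n | A₀ ≤ a} + v * #(initSegment A (u * n / v)) ≤ u * n := by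
    refine mul_card_add_mul_card_le (fun a ha => ?_) (fun b hb => ?_) (fun a ha b hb => ?_)
    · obtain ⟨-, ha1, han⟩ := mem_initSegment.mp (mem_filter.mp ha).1
      exact ⟨ha1, Nat.mul_le_mul_left u han⟩
    · obtain ⟨-, hb1, hbm⟩ := mem_initSegment.mp hb
      exact ⟨hb1, (Nat.mul_le_mul_left v hbm).trans (Nat.mul_div_le (u * n) v)⟩
    · obtain ⟨ha, hA₀a⟩ := mem_filter.mp ha
      exact hdisj a hA₀a (mem_initSegment.mp ha).1 b (mem_initSegment.mp hb).1
  have := Nat.mul_le_mul_left u (card_initSegment_le_card_filter_add A n A₀)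
  rw [mul_add] at this
  omega

lemma exists_nat_div_mem_Ioo {p q : ℝ} (hp : 0 ≤ p) (hpq : p < q) :
    ∃ u v : ℕ, 0 < v ∧ p < u / v ∧ (u / v : ℝ) < q := by
  obtain ⟨ρ, hpρ, hρq⟩ := exists_rat_btwn hpq
  have hρ : 0 ≤ ρ.num := Rat.num_nonneg.mpr (by exact_mod_cast hp.trans hpρ.le)
  refine ⟨ρ.num.natAbs, ρ.den, ρ.den_pos, ?_⟩
  rw [Nat.cast_natAbs, Int.cast_abs, abs_of_nonneg (Int.cast_nonneg_iff.mpr hρ), ← Rat.cast_def]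
  exact ⟨hpρ, hρq⟩

lemma eventually_disjoint_cell {A : Set ℕ} {p q : ℝ}
    (hgap : ∀ r ∈ ratioSet A, r ∉ Set.Ioo p q) {u v : ℕ} (hv : 0 < v)
    (hpρ : p < u / v) (hρq : (u / v : ℝ) < q) :
    ∀ᶠ a in atTop, a ∈ A → ∀ b ∈ A, Disjoint (cell u a) (cell v b) := by
  have hlo : Tendsto (fun a : ℕ => (u / v : ℝ) * (1 - 1 / a)) atTop (nhds (u / v)) := by
    simpa using (tendsto_one_div_atTop_nhds_zero_nat.const_sub 1).const_mul (u / v : ℝ)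
  have hhi : Tendsto (fun a : ℕ => (u / v : ℝ) + 1 / a) atTop (nhds (u / v)) := by
    simpa using tendsto_one_div_atTop_nhds_zero_nat.const_add (u / v : ℝ)
  filter_upwards [hlo.eventually (lt_mem_nhds hpρ), hhi.eventually (gt_mem_nhds hρq),
    eventually_gt_atTop 0] with a hpa haq ha haA b hbA
  by_contra h
  obtain ⟨hab, hba⟩ := div_mem_Ioo_of_not_disjoint_cell hv ha h
  exact hgap _ ⟨b, hbA, a, haA, rfl⟩ ⟨hpa.trans hab, hba.trans haq⟩

lemma exists_eventually_card_initSegment_le {A : Set ℕ} {p q δ : ℝ} (hp : 0 ≤ p) (hpq : p < q)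
    (hgap : ∀ r ∈ ratioSet A, r ∉ Set.Ioo p q) (hδ : 0 ≤ δ)
    (hlow : ∀ᶠ n : ℕ in atTop, δ * n ≤ #(initSegment A n)) :
    ∃ C : ℝ, ∀ᶠ n : ℕ in atTop, (#(initSegment A n) : ℝ) ≤ (1 - δ) * n + C := by
  obtain ⟨u, v, hv, hpρ, hρq⟩ := exists_nat_div_mem_Ioo hp hpq
  have hu : 0 < u := Nat.pos_of_ne_zero fun hu => by simp [hu] at hpρ; linarith
  obtain ⟨A₀, hA₀⟩ := eventually_atTop.mp (eventually_disjoint_cell hgap hv hpρ hρq)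
  have hm : Tendsto (fun n => u * n / v) atTop atTop :=
    (Nat.tendsto_div_const_atTop hv.ne').comp
      (tendsto_atTop_mono (fun n => Nat.le_mul_of_pos_left n hu) tendsto_id)
  refine ⟨A₀ + δ * v / u, ?_⟩
  filter_upwards [hm.eventually hlow] with n hlow_m
  set m := u * n / v
  have hpack : (u : ℝ) * #(initSegment A n) + v * #(initSegment A m) ≤ u * n + u * A₀ := by
    exact_mod_cast mul_card_initSegment_add_le hA₀ n
  have hfloor : (u : ℝ) * n < v * m + v := by exact_mod_cast Nat.lt_mul_div_succ (u * n) hv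
  have h1 := mul_le_mul_of_nonneg_left hlow_m (Nat.cast_nonneg v)
  have h2 := mul_le_mul_of_nonneg_left hfloor.le hδ
  have hu' : (0 : ℝ) < u := by exact_mod_cast hu
  rw [← mul_le_mul_iff_right₀ hu', mul_add, mul_add, mul_div_cancel₀ _ hu'.ne']
  linarith

lemma initSegment_ceil_sub_one_subset {A : Set ℕ} {p q : ℝ}
    (hgap : ∀ r ∈ ratioSet A, r ∉ Set.Ioo p q) {a : ℕ} (ha : a ∈ A) (ha0 : 0 < a) :
    initSegment A (⌈q * a⌉₊ - 1) ⊆ initSegment A ⌊p * a⌋₊ := by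
  intro b hb
  obtain ⟨hbA, hb1, hbl⟩ := mem_initSegment.mp hb
  refine mem_initSegment.mpr ⟨hbA, hb1, Nat.le_floor ?_⟩
  have ha' : (0 : ℝ) < a := by exact_mod_cast ha0
  have hbq : (b : ℝ) < q * a := Nat.lt_ceil.mp (by omega)
  have hbp : (b : ℝ) / a ≤ p := not_lt.mp fun hpb =>
    hgap _ ⟨b, hbA, a, ha, rfl⟩ ⟨hpb, (div_lt_iff₀ ha').mpr hbq⟩
  exact (div_le_iff₀ ha').mp hbp

lemma ratioSet_inter_Ioo_nonempty {A : Set ℕ} (hd : (1 : ℝ) / 2 ≤ lowerDensity A) {p q : ℝ}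
    (hp : 0 < p) (hpq : p < q) : (ratioSet A ∩ Set.Ioo p q).Nonempty := by
  by_contra hempty
  have hgap : ∀ r ∈ ratioSet A, r ∉ Set.Ioo p q := fun r hr hrpq => hempty ⟨r, hr, hrpq⟩
  have hq : 0 < q := hp.trans hpq
  -- `δ > p / (p + q)` makes the lower bound at `qa` beat the upper bound at `pa`.
  obtain ⟨δ, hpδ, hδ⟩ := exists_between
    (show p / (p + q) < 1 / 2 by rw [div_lt_iff₀ (by positivity)]; linarith)
  have hδ0 : 0 < δ := (by positivity : 0 < p / (p + q)).trans hpδ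
  have hγ : 0 < δ * q - (1 - δ) * p := by rw [div_lt_iff₀ (by positivity)] at hpδ; linarith
  have hlow := eventually_mul_le_card_initSegment (hδ.trans_le hd)
  obtain ⟨C, hup⟩ := exists_eventually_card_initSegment_le hp.le hpq hgap hδ0.le hlow
  have hl : Tendsto (fun a : ℕ => ⌈q * a⌉₊ - 1) atTop atTop :=
    (tendsto_sub_atTop_nat 1).comp
      (tendsto_nat_ceil_atTop.comp (tendsto_natCast_atTop_atTop.const_mul_atTop hq))
  have hk : Tendsto (fun a : ℕ => ⌊p * a⌋₊) atTop atTop :=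
    tendsto_nat_floor_atTop.comp (tendsto_natCast_atTop_atTop.const_mul_atTop hp)
  have hlarge : ∀ᶠ a : ℕ in atTop, C + δ < (δ * q - (1 - δ) * p) * a :=
    (tendsto_natCast_atTop_atTop.const_mul_atTop hγ).eventually_gt_atTop _
  obtain ⟨N, hN⟩ := eventually_atTop.mp ((hl.eventually hlow).and ((hk.eventually hup).and hlarge))
  obtain ⟨a, haA, hNa⟩ := (infinite_of_eventually_mul_le_card_initSegment hδ0 hlow).exists_gt N
  obtain ⟨hlo, hhi, hbig⟩ := hN a hNa.le
  have hhole : (#(initSegment A (⌈q * a⌉₊ - 1)) : ℝ) ≤ #(initSegment A ⌊p * a⌋₊) := by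
    exact_mod_cast card_le_card (initSegment_ceil_sub_one_subset hgap haA (by omega))
  have hl_ge : q * a - 1 ≤ ((⌈q * a⌉₊ - 1 : ℕ) : ℝ) := by
    have : (⌈q * a⌉₊ : ℝ) ≤ (⌈q * a⌉₊ - 1 : ℕ) + 1 := by
      exact_mod_cast (by omega : ⌈q * a⌉₊ ≤ (⌈q * a⌉₊ - 1) + 1)
    linarith [Nat.le_ceil (q * a)]
  have hk_le : (⌊p * a⌋₊ : ℝ) ≤ p * a := Nat.floor_le (by positivity)
  have h1 := mul_le_mul_of_nonneg_left hl_ge hδ0.le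
  have h2 := mul_le_mul_of_nonneg_left hk_le (by linarith : (0 : ℝ) ≤ 1 - δ)
  linarith

theorem stmt6_general (A : Set ℕ) (hd : (1 : ℝ) / 2 ≤ lowerDensity A) :
    Set.Ici (0 : ℝ) ⊆ closure (ratioSet A) := by
  rw [← closure_Ioi]
  refine closure_minimal (fun x hx => mem_closure_iff_nhds.mpr fun t ht => ?_) isClosed_closure
  obtain ⟨l, r, ⟨hlx, hxr⟩, hsub⟩ := mem_nhds_iff_exists_Ioo_subset.mp ht
  have hx : 0 < x := hx
  obtain ⟨y, hyR, hy⟩ := ratioSet_inter_Ioo_nonempty hd (lt_max_of_lt_right (half_pos hx))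
    (max_lt hlx (half_lt_self hx) |>.trans hxr)
  exact ⟨y, hsub ⟨(le_max_left _ _).trans_lt hy.1, hy.2⟩, hyR⟩

theorem stmt6 (A : Set ℕ) (hA : 0 ∉ A) (hd : (1 : ℝ) / 2 ≤ lowerDensity A) :
    Set.Ici (0 : ℝ) ⊆ closure (ratioSet A) :=
  stmt6_general A hd
end

section
/- For every δ with 0 ≤ δ < 1/2, there exists a set A ⊆ ℕ with lower asymptotic density exactly δ such that R(A) is not dense in [0,∞). -/
open Filter Set

theorem liminf_div_eq_of_affine_bounds {f : ℕ → ℝ} {δ C : ℝ}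
    (hlow : ∀ᶠ n in atTop, δ * n - C ≤ f n) (hup : ∃ᶠ n in atTop, f n ≤ δ * n + C) :
    liminf (fun n => f n / n) atTop = δ := by
  have hsmall : ∀ η > 0, ∀ᶠ n : ℕ in atTop, 0 < (n : ℝ) ∧ C < η * n := fun η hη => by
    filter_upwards [(tendsto_const_div_atTop_nhds_zero_nat C).eventually (gt_mem_nhds hη),
      eventually_gt_atTop 0] with n hCn hn
    have hn' : (0 : ℝ) < n := by exact_mod_cast hn
    exact ⟨hn', by rwa [div_lt_iff₀ hn'] at hCn⟩
  have hlow' : ∀ η > 0, ∀ᶠ n in atTop, δ - η ≤ f n / n := fun η hη => by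
    filter_upwards [hlow, hsmall η hη] with n hn ⟨hn0, hCn⟩
    rw [le_div_iff₀ hn0]
    linarith
  have hup' : ∀ η > 0, ∃ᶠ n in atTop, f n / n ≤ δ + η := fun η hη => by
    refine (hup.and_eventually (hsmall η hη)).mono fun n ⟨hn, hn0, hCn⟩ => ?_
    rw [div_le_iff₀ hn0]
    linarith
  refine le_antisymm (le_of_forall_pos_le_add fun η hη => ?_)
    (le_of_forall_pos_le_add fun η hη => ?_)
  · exact liminf_le_of_frequently_le (hup' η hη) (isBoundedUnder_of_eventually_ge (hlow' 1 one_pos))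
  · have := le_liminf_of_le (IsCoboundedUnder.of_frequently_le (hup' 1 one_pos)) (hlow' η hη)
    linarith

theorem natCard_inter_Icc_one_eq_count {A : Set ℕ} [DecidablePred (· ∈ A)] (h0 : 0 ∉ A) (n : ℕ) :
    Nat.card ↥(A ∩ Icc 1 n) = Nat.count (· ∈ A) (n + 1) := by
  have : A ∩ Icc 1 n = ↑({x ∈ Finset.range (n + 1) | x ∈ A}) := by
    ext (_ | x)
    · simp [h0]
    · simp [and_comm]
  rw [this, Nat.card_coe_set_eq, ncard_coe_finset, Nat.count_eq_card_filter_range]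

theorem lowerDensity_eq_of_count_bounds {A : Set ℕ} [DecidablePred (· ∈ A)] (h0 : 0 ∉ A)
    {δ C : ℝ} (hδ : 0 ≤ δ) (hlow : ∀ᶠ n in atTop, δ * n - C ≤ Nat.count (· ∈ A) n)
    (hup : ∃ᶠ n in atTop, (Nat.count (· ∈ A) n : ℝ) ≤ δ * n + C) :
    lowerDensity A = δ := by
  have hsucc : ∀ n, (Nat.count (· ∈ A) (n + 1) : ℝ) ≤ Nat.count (· ∈ A) n + 1 := fun n => by
    rw [Nat.count_succ]
    split_ifs <;> simp
  unfold lowerDensity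
  simp_rw [natCard_inter_Icc_one_eq_count h0]
  refine liminf_div_eq_of_affine_bounds (C := C + 1) ?_ (hup.mono fun n hn => ?_)
  · filter_upwards [tendsto_add_atTop_nat 1 |>.eventually hlow] with n hn
    push_cast at hn
    linarith
  · linarith [hsucc n]

theorem not_Ici_subset_closure_of_disjoint_Ioo {S : Set ℝ} {u v : ℝ} (hu : 0 ≤ u) (huv : u < v)
    (hS : Disjoint S (Ioo u v)) : ¬ Ici 0 ⊆ closure S := fun h =>
  (hS.closure_left isOpen_Ioo).ne_of_mem (h (show 0 ≤ (u + v) / 2 by linarith))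
    ⟨by linarith, by linarith⟩ rfl

theorem Nat.ceil_mul_sub_ceil_mul_le {δ : ℝ} (hδ1 : δ ≤ 1) {a b : ℕ} (hab : a ≤ b) :
    ⌈δ * b⌉₊ - ⌈δ * a⌉₊ ≤ b - a := by
  have hsplit : ⌈δ * b⌉₊ ≤ ⌈δ * a⌉₊ + ⌈δ * ((b - a : ℕ) : ℝ)⌉₊ := by
    calc ⌈δ * b⌉₊ = ⌈δ * a + δ * ((b - a : ℕ) : ℝ)⌉₊ := by push_cast [hab]; ring_nf
      _ ≤ _ := Nat.ceil_add_le _ _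
  have hdiff : ⌈δ * ((b - a : ℕ) : ℝ)⌉₊ ≤ b - a :=
    Nat.ceil_le.2 (mul_le_of_le_one_left (Nat.cast_nonneg _) hδ1)
  omega

theorem Nat.cast_ceil_mul_sub_ceil_mul_lt {δ : ℝ} (hδ0 : 0 ≤ δ) {a b : ℕ} (hab : a ≤ b) :
    ((⌈δ * b⌉₊ - ⌈δ * a⌉₊ : ℕ) : ℝ) < δ * (b - a) + 1 := by
  have hmono : ⌈δ * a⌉₊ ≤ ⌈δ * b⌉₊ := Nat.ceil_mono (by gcongr)
  rw [Nat.cast_sub hmono]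
  linarith [Nat.ceil_lt_add_one (mul_nonneg hδ0 (Nat.cast_nonneg b)), Nat.le_ceil (δ * a)]

theorem Nat.exists_le_lt_succ_of_strictMono {c : ℕ → ℕ} (hc : StrictMono c) {n : ℕ}
    (hn : c 0 ≤ n) : ∃ k, c k ≤ n ∧ n < c (k + 1) := by
  have hex : ∃ k, n < c k := ⟨n + 1, Nat.lt_of_lt_of_le n.lt_succ_self (hc.id_le _)⟩
  obtain ⟨k, hk⟩ := Nat.exists_eq_add_one_of_ne_zero
    (fun h => (Nat.find_spec hex).not_ge (h ▸ hn) : Nat.find hex ≠ 0)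
  exact ⟨k, not_lt.1 (Nat.find_min hex (by omega)), hk ▸ Nat.find_spec hex⟩

def blockSet (c L : ℕ → ℕ) : Set ℕ := ⋃ k, Ico (c k) (c k + L k)

namespace blockSet

variable {c L : ℕ → ℕ}

theorem zero_notMem (hc : Monotone c) (hc0 : 0 < c 0) : 0 ∉ blockSet c L := by
  simp only [blockSet, mem_iUnion, mem_Ico, not_exists, not_and]
  intro k hk
  exact absurd (hc (Nat.zero_le k)) (by omega)

theorem disjoint_ratioSet_Ioo {u g : ℝ} (hu : 1 ≤ u) (hug : u ≤ g)
    (hL : ∀ k, (c k + L k : ℝ) ≤ u * c k) (hc : ∀ k, g * c k ≤ c (k + 1)) :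
    Disjoint (ratioSet (blockSet c L)) (Ioo u (g / u)) := by
  have hmono : Monotone fun k => (c k : ℝ) := monotone_nat_of_le_succ fun k => by
    nlinarith [hc k, (Nat.cast_nonneg (c k) : (0 : ℝ) ≤ c k)]
  rw [disjoint_left]
  rintro _ ⟨m, hm, n, hn, rfl⟩ ⟨hlo, hhi⟩
  simp only [blockSet, mem_iUnion, mem_Ico] at hm hn
  obtain ⟨k, hkm, hmk⟩ := hm
  obtain ⟨j, hjn, hnj⟩ := hn
  have hkm : (c k : ℝ) ≤ m := by exact_mod_cast hkm
  have hmk : (m : ℝ) < u * c k := (by exact_mod_cast hmk : (m : ℝ) < c k + L k).trans_le (hL k)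
  have hjn : (c j : ℝ) ≤ n := by exact_mod_cast hjn
  have hnj : (n : ℝ) < u * c j := (by exact_mod_cast hnj : (n : ℝ) < c j + L j).trans_le (hL j)
  have hn0 : (0 : ℝ) < n := by nlinarith
  rw [lt_div_iff₀ hn0] at hlo
  rw [div_lt_div_iff₀ hn0 (by linarith)] at hhi
  rcases lt_trichotomy k j with hkj | rfl | hjk
  · have := hmono (Nat.succ_le_of_lt hkj)
    nlinarith [hc k]
  · nlinarith
  · have := hmono (Nat.succ_le_of_lt hjk)
    nlinarith [hc j]

theorem mem_iff_lt (hc : Monotone c) (hfit : ∀ k, c k + L k ≤ c (k + 1)) {k n : ℕ}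
    (hkn : c k ≤ n) (hnk : n < c (k + 1)) : n ∈ blockSet c L ↔ n < c k + L k := by
  refine ⟨fun hn => ?_, fun hn => mem_iUnion.2 ⟨k, hkn, hn⟩⟩
  obtain ⟨j, hjn, hnj⟩ := mem_iUnion.1 hn
  rcases lt_trichotomy j k with hjk | rfl | hkj
  · have := hc (show j + 1 ≤ k by omega)
    have := hfit j
    omega
  · exact hnj
  · have := hc (show k + 1 ≤ j by omega)
    omega

variable [DecidablePred (· ∈ blockSet c L)]

theorem count_add (hc : Monotone c) (hfit : ∀ k, c k + L k ≤ c (k + 1)) (k : ℕ) {i : ℕ}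
    (hi : c k + i ≤ c (k + 1)) :
    Nat.count (· ∈ blockSet c L) (c k + i) = Nat.count (· ∈ blockSet c L) (c k) + min i (L k) := by
  induction i with
  | zero => simp
  | succ i ih =>
    have hmem := mem_iff_lt (L := L) hc hfit (n := c k + i) le_self_add (by omega)
    rw [← add_assoc, Nat.count_succ, ih (by omega)]
    simp only [hmem]
    split_ifs <;> omega

theorem count_eq_sum (hc : Monotone c) (hfit : ∀ k, c k + L k ≤ c (k + 1)) (k : ℕ) :
    Nat.count (· ∈ blockSet c L) (c k) = ∑ j ∈ Finset.range k, L j := by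
  induction k with
  | zero =>
    refine Nat.count_of_forall_not fun m hm hmem => ?_
    obtain ⟨j, hjm, -⟩ := mem_iUnion.1 hmem
    exact absurd (hc (Nat.zero_le j)) (by omega)
  | succ k ih =>
    have hk := hfit k
    rw [show c (k + 1) = c k + (c (k + 1) - c k) by omega, count_add hc hfit k (by omega), ih,
      Finset.sum_range_succ, min_eq_right (by omega)]

theorem lowerDensity_eq (hc : StrictMono c) (hc0 : 0 < c 0) {F : ℕ → ℕ} (hF : Monotone F)
    (hfit : ∀ k, c k + (F (k + 1) - F k) ≤ c (k + 1)) {δ : ℝ} (hδ0 : 0 ≤ δ) (hδ1 : δ ≤ 1)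
    (hFlow : ∀ k, δ * c k ≤ F k) (hFup : ∀ k, (F k : ℝ) ≤ δ * c k + 1) :
    lowerDensity (blockSet c fun k => F (k + 1) - F k) = δ := by
  classical
  have hcount : ∀ k, Nat.count (· ∈ blockSet c fun k => F (k + 1) - F k) (c k) + F 0 = F k :=
    fun k => by
      rw [count_eq_sum hc.monotone hfit, Finset.sum_range_tsub hF]
      have := hF (Nat.zero_le k)
      omega
  refine lowerDensity_eq_of_count_bounds (zero_notMem hc.monotone hc0) hδ0 (C := F 0 + 1) ?_ ?_
  · filter_upwards [eventually_ge_atTop (c 0)] with n hn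
    obtain ⟨k, hkn, hnk⟩ := Nat.exists_le_lt_succ_of_strictMono hc hn
    have hblock := count_add hc.monotone hfit k (i := n - c k) (by omega)
    rw [Nat.add_sub_cancel' hkn] at hblock
    have hnat : Nat.count (· ∈ blockSet c fun k => F (k + 1) - F k) n + F 0
        = min (F k + (n - c k)) (F (k + 1)) := by
      have := hcount k
      have := hF (show k ≤ k + 1 by omega)
      omega
    have hreal : (Nat.count (· ∈ blockSet c fun k => F (k + 1) - F k) n : ℝ) + F 0
        = min ((F k : ℝ) + (n - c k)) (F (k + 1)) := by
      rw [← Nat.cast_sub hkn]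
      exact_mod_cast hnat
    have hkn : (c k : ℝ) ≤ n := by exact_mod_cast hkn
    have hnk : (n : ℝ) ≤ c (k + 1) := by exact_mod_cast hnk.le
    have : δ * n ≤ min ((F k : ℝ) + (n - c k)) (F (k + 1)) :=
      le_min (by nlinarith [hFlow k, mul_nonneg (sub_nonneg.2 hδ1) (sub_nonneg.2 hkn)])
        (by nlinarith [hFlow (k + 1)])
    linarith
  · refine frequently_atTop.2 fun a => ⟨c a, hc.id_le a, ?_⟩
    have : (Nat.count (· ∈ blockSet c fun k => F (k + 1) - F k) (c a) : ℝ) + F 0 = F a := by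
      exact_mod_cast hcount a
    linarith [hFup a, (Nat.cast_nonneg (F 0) : (0 : ℝ) ≤ F 0)]

theorem lowerDensity_ceil_eq (hc : StrictMono c) (hc0 : 0 < c 0) {δ : ℝ} (hδ0 : 0 ≤ δ)
    (hδ1 : δ ≤ 1) : lowerDensity (blockSet c fun k => ⌈δ * c (k + 1)⌉₊ - ⌈δ * c k⌉₊) = δ := by
  refine lowerDensity_eq hc hc0 (F := fun k => ⌈δ * c k⌉₊)
    (fun a b hab => Nat.ceil_mono (mul_le_mul_of_nonneg_left (by exact_mod_cast hc.monotone hab) hδ0))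
    (fun k => ?_) hδ0 hδ1 (fun k => Nat.le_ceil _)
    (fun k => (Nat.ceil_lt_add_one (mul_nonneg hδ0 (Nat.cast_nonneg _))).le)
  have hk := hc.monotone (Nat.le_add_right k 1)
  have := Nat.ceil_mul_sub_ceil_mul_le hδ1 hk
  omega

end blockSet

noncomputable def growthSeq (ε : ℝ) (N : ℕ) : ℕ → ℕ
  | 0 => N
  | k + 1 => growthSeq ε N k + ⌈ε * growthSeq ε N k⌉₊

namespace growthSeq

variable {ε : ℝ} {N : ℕ}

theorem monotone : Monotone (growthSeq ε N) :=
  monotone_nat_of_le_succ fun _ => Nat.le_add_right _ _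

theorem strictMono (hε : 0 < ε) (hN : 0 < N) : StrictMono (growthSeq ε N) :=
  strictMono_nat_of_lt_succ fun k => Nat.lt_add_of_pos_right <| Nat.ceil_pos.2 <|
    mul_pos hε (Nat.cast_pos.2 (hN.trans_le (monotone (Nat.zero_le k))))

theorem one_add_mul_le (k : ℕ) : (1 + ε) * growthSeq ε N k ≤ growthSeq ε N (k + 1) := by
  simp only [growthSeq, Nat.cast_add]
  linarith [Nat.le_ceil (ε * growthSeq ε N k)]

theorem lt_one_add_mul_add_one (hε : 0 ≤ ε) (k : ℕ) :
    (growthSeq ε N (k + 1) : ℝ) < (1 + ε) * growthSeq ε N k + 1 := by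
  simp only [growthSeq, Nat.cast_add]
  linarith [Nat.ceil_lt_add_one (mul_nonneg hε (Nat.cast_nonneg (growthSeq ε N k)))]

theorem add_ceil_sub_ceil_le {δ t : ℝ} (hε : 0 ≤ ε) (hδ0 : 0 ≤ δ) (hδ1 : δ ≤ 1) {k : ℕ}
    (ht : 2 ≤ t * growthSeq ε N k) :
    (growthSeq ε N k : ℝ) + ((⌈δ * growthSeq ε N (k + 1)⌉₊ - ⌈δ * growthSeq ε N k⌉₊ : ℕ) : ℝ)
      ≤ (1 + δ * ε + t) * growthSeq ε N k := by
  have hlen := Nat.cast_ceil_mul_sub_ceil_mul_lt hδ0 (monotone (Nat.le_succ k) :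
    growthSeq ε N k ≤ growthSeq ε N (k + 1))
  have hstep := lt_one_add_mul_add_one (N := N) hε k
  nlinarith

end growthSeq

theorem exists_one_add_mul_add_sq_lt {δ : ℝ} (h0 : 0 ≤ δ) (h1 : δ < 1 / 2) :
    ∃ ε > 0, ∃ t > 0, (1 + δ * ε + t) ^ 2 < 1 + ε := by
  obtain ⟨s, rfl⟩ : ∃ s, δ = (1 - s) / 2 := ⟨1 - 2 * δ, by ring⟩
  have hs : 0 < s := by linarith
  refine ⟨s / 2, by positivity, s ^ 2 / 16, by positivity, ?_⟩
  nlinarith [mul_pos hs hs, mul_pos (mul_pos hs hs) hs, mul_pos (mul_pos hs hs) (mul_pos hs hs)]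

theorem stmt7 (δ : ℝ) (h0 : 0 ≤ δ) (h1 : δ < 1 / 2) :
    ∃ A : Set ℕ, 0 ∉ A ∧ lowerDensity A = δ ∧
      ¬ (Set.Ici (0 : ℝ) ⊆ closure (ratioSet A)) := by
  obtain ⟨ε, hε, t, ht, hsq⟩ := exists_one_add_mul_add_sq_lt h0 h1
  set c := growthSeq ε (⌈2 / t⌉₊ + 1)
  have hc : StrictMono c := growthSeq.strictMono hε (Nat.add_one_pos _)
  have hc0 : 0 < c 0 := Nat.add_one_pos _
  have htc : ∀ k, 2 ≤ t * c k := fun k => by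
    have : 2 / t ≤ (c k : ℝ) := (Nat.le_ceil _).trans <| by
      exact_mod_cast (Nat.le_succ _).trans (growthSeq.monotone (Nat.zero_le k))
    rwa [div_le_iff₀ ht, mul_comm] at this
  have hu : 1 ≤ 1 + δ * ε + t := by nlinarith
  have hug : 1 + δ * ε + t ≤ 1 + ε := by nlinarith
  have hgap : 1 + δ * ε + t < (1 + ε) / (1 + δ * ε + t) := by
    rw [lt_div_iff₀ (by linarith)]
    nlinarith
  refine ⟨blockSet c fun k => ⌈δ * c (k + 1)⌉₊ - ⌈δ * c k⌉₊,
    blockSet.zero_notMem hc.monotone hc0, blockSet.lowerDensity_ceil_eq hc hc0 h0 (by linarith), ?_⟩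
  exact not_Ici_subset_closure_of_disjoint_Ioo (by linarith) hgap
    (blockSet.disjoint_ratioSet_Ioo hu hug
      (fun k => growthSeq.add_ceil_sub_ceil_le hε.le h0 (by linarith) (htc k)) growthSeq.one_add_mul_le)
end

section
/- Suppose A ⊆ ℕ is a set whose quotient set avoids an interval: there exist 0 < α < β ≤ 1 with R(A) ∩ (α, β) = ∅. Then the lower asymptotic density of A satisfies (1 + α/β)·d(A) ≤ α/β. -/
/-!
Write `A(x) = |A ∩ [1, x]|`. Since no quotient of two elements of `A` lies in `(α, β)`, every
`b ∈ A` leaves the window `(b/β, b/α)` free of elements of `A`. Walking through `A` in increasing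
order, the window of each element either overlaps the previous one, or (once
`b ≥ β(1+α)/(β-α)`) is long enough to pay for the new element; this gives
`A(b) + α·A(b/α) ≤ b + O(1)` for `b ∈ A`, and hence `A(n) + α·A(t) ≤ α t + O(1)` whenever
`n ≤ α t`. For `a ∈ A` the interval `(αa, βa)` is free of `A` too, so
`A(βa) + α·A(a) = A(αa) + α·A(a) ≤ α a + O(1)`. Bounding `A(βa)` and `A(a)` below by the density
along large `a ∈ A` yields `(α + β)·d(A) ≤ α`.
-/

open Filter

noncomputable def countUpTo (A : Set ℕ) (n : ℕ) : ℕ := Nat.card ↥(A ∩ Set.Icc 1 n)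

section Counting

variable {A : Set ℕ}

open Classical Count in
theorem countUpTo_eq_count (A : Set ℕ) (n : ℕ) :
    countUpTo A n = Nat.count (fun k => k + 1 ∈ A) n := by
  rw [Nat.count_eq_card_fintype, ← Nat.card_eq_fintype_card]
  exact Nat.card_congr
    { toFun := fun x => ⟨x.1 - 1, by
        obtain ⟨hx, h1, h2⟩ := x.2
        exact ⟨by omega, by rwa [Nat.sub_add_cancel h1]⟩⟩
      invFun := fun k => ⟨k.1 + 1, k.2.2, by omega, k.2.1⟩
      left_inv := fun x => Subtype.ext (Nat.sub_add_cancel x.2.2.1)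
      right_inv := fun k => Subtype.ext (Nat.add_sub_cancel k.1 1) }

theorem countUpTo_zero (A : Set ℕ) : countUpTo A 0 = 0 := by
  rw [countUpTo_eq_count, Nat.count_zero]

theorem countUpTo_succ_of_mem {n : ℕ} (h : n + 1 ∈ A) :
    countUpTo A (n + 1) = countUpTo A n + 1 := by
  classical
  simp only [countUpTo_eq_count, Nat.count_succ, if_pos h]

theorem countUpTo_succ_of_notMem {n : ℕ} (h : n + 1 ∉ A) :
    countUpTo A (n + 1) = countUpTo A n := by
  classical
  simp only [countUpTo_eq_count, Nat.count_succ, if_neg h, add_zero]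

theorem countUpTo_le (A : Set ℕ) (n : ℕ) : countUpTo A n ≤ n := by
  classical
  rw [countUpTo_eq_count]
  exact Nat.count_le _

theorem countUpTo_mono (A : Set ℕ) : Monotone (countUpTo A) := by
  classical
  simpa only [funext (countUpTo_eq_count A)] using Nat.count_monotone _

theorem countUpTo_le_add_sub (A : Set ℕ) {m n : ℕ} (h : m ≤ n) :
    (countUpTo A n : ℝ) ≤ countUpTo A m + (n - m) := by
  classical
  obtain ⟨k, rfl⟩ := Nat.exists_eq_add_of_le h
  have := Nat.count_le (p := fun j => m + j + 1 ∈ A) (n := k)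
  rw [countUpTo_eq_count, countUpTo_eq_count, Nat.count_add]
  push_cast
  linarith [(Nat.cast_le (α := ℝ)).mpr this]

theorem countUpTo_le_of_forall_notMem {m n : ℕ} (h : ∀ k, m < k → k ≤ n → k ∉ A) :
    countUpTo A n ≤ countUpTo A m := by
  classical
  rcases le_total n m with hnm | hmn
  · exact countUpTo_mono A hnm
  obtain ⟨k, rfl⟩ := Nat.exists_eq_add_of_le hmn
  rw [countUpTo_eq_count, countUpTo_eq_count, Nat.count_add,
    (Nat.count_iff_forall_not (p := fun j => m + j + 1 ∈ A)).mpr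
      fun j hj => h _ (by omega) (by omega), add_zero]

theorem exists_mem_countUpTo_le {n : ℕ} (h : 0 < countUpTo A n) :
    ∃ a ∈ A, countUpTo A n ≤ a := by
  classical
  have hle : countUpTo A n ≤ countUpTo A (Nat.findGreatest (· ∈ A) n) :=
    countUpTo_le_of_forall_notMem fun _ hk hkn => Nat.findGreatest_is_greatest hk hkn
  refine ⟨_, Nat.findGreatest_of_ne_zero rfl fun h0 => ?_, hle.trans (countUpTo_le A _)⟩
  rw [h0, countUpTo_zero] at hle
  omega

end Counting

-- The largest natural number strictly below `x`, or `0` if there is none.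
noncomputable def ceilPred (x : ℝ) : ℕ := ⌈x⌉₊ - 1

theorem sub_one_le_ceilPred (x : ℝ) : x - 1 ≤ ceilPred x := by
  have h : ⌈x⌉₊ ≤ ceilPred x + 1 := by unfold ceilPred; omega
  have := Nat.le_ceil x
  have : (⌈x⌉₊ : ℝ) ≤ ceilPred x + 1 := by exact_mod_cast h
  linarith

theorem lt_of_le_ceilPred {x : ℝ} {k : ℕ} (hk : 0 < k) (h : k ≤ ceilPred x) : (k : ℝ) < x :=
  Nat.lt_ceil.mp (by unfold ceilPred at h; omega)

theorem ceilPred_le {x : ℝ} (hx : 0 ≤ x) : (ceilPred x : ℝ) ≤ x := by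
  rcases Nat.eq_zero_or_pos (ceilPred x) with h | h
  · simpa [h] using hx
  · exact (lt_of_le_ceilPred h le_rfl).le

theorem ceilPred_le_of_le {x : ℝ} {t : ℕ} (h : x ≤ t) : ceilPred x ≤ t := by
  have := Nat.ceil_le.mpr h
  unfold ceilPred
  omega

theorem le_of_forall_exists_mul_le_mul_add {x y K : ℝ} (h : ∀ M, ∃ a ≥ M, x * a ≤ y * a + K) :
    x ≤ y := by
  by_contra! hxy
  obtain ⟨a, ha, hle⟩ := h ((K + 1) / (x - y))
  rw [ge_iff_le, div_le_iff₀ (sub_pos.mpr hxy)] at ha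
  linarith

section RatioGap

variable {A : Set ℕ} {α β : ℝ}

theorem mul_le_of_mul_lt_of_mem (havoid : ratioSet A ∩ Set.Ioo α β = ∅) {b k : ℕ}
    (hb : b ∈ A) (hk : k ∈ A) (h : α * k < b) : β * k ≤ b := by
  by_contra! h'
  have hk0 : (0 : ℝ) < k := Nat.cast_pos.mpr <| Nat.pos_of_ne_zero fun h0 => by
    subst h0; simp only [CharP.cast_eq_zero, mul_zero] at h h'; linarith
  exact Set.eq_empty_iff_forall_notMem.mp havoid (b / k)
    ⟨⟨b, hb, k, hk, rfl⟩, (lt_div_iff₀ hk0).mpr h, (div_lt_iff₀ hk0).mpr h'⟩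

theorem countUpTo_ceilPred_div_le (hα : 0 < α) (hβ : 0 < β)
    (havoid : ratioSet A ∩ Set.Ioo α β = ∅) {b : ℕ} (hb : b ∈ A) :
    countUpTo A (ceilPred (b / α)) ≤ countUpTo A ⌊b / β⌋₊ := by
  refine countUpTo_le_of_forall_notMem fun k hqk hkP hk => ?_
  have hbk : b < β * k := by
    rw [← div_lt_iff₀' hβ]
    exact (Nat.floor_lt (by positivity)).mp hqk
  have hkb : α * k < b := by
    rw [← lt_div_iff₀' hα]
    exact lt_of_le_ceilPred (by omega) hkP
  exact (mul_le_of_mul_lt_of_mem havoid hb hk hkb).not_gt hbk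

theorem mul_countUpTo_floor_le (hα : 0 < α) (hαβ : α < β) {n b' : ℕ} (hb' : b' ≤ n)
    (hn : β * (1 + α) ≤ (n + 1) * (β - α)) :
    α * (countUpTo A ⌊((n : ℝ) + 1) / β⌋₊ : ℝ)
      ≤ α * countUpTo A (ceilPred (b' / α)) + (n - b') := by
  have hβ : 0 < β := hα.trans hαβ
  set q := ⌊((n : ℝ) + 1) / β⌋₊
  set P := ceilPred (b' / α)
  have hb'n : (b' : ℝ) ≤ n := by exact_mod_cast hb'
  rcases le_total q P with hqP | hPq
  · have : (countUpTo A q : ℝ) ≤ countUpTo A P := by exact_mod_cast countUpTo_mono A hqP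
    linarith [mul_le_mul_of_nonneg_left this hα.le]
  have hq := mul_le_mul_of_nonneg_left (Nat.floor_le (by positivity) : (q : ℝ) ≤ (n + 1) / β) hα.le
  have hP := mul_le_mul_of_nonneg_left (sub_one_le_ceilPred (b' / α)) hα.le
  have hcount := mul_le_mul_of_nonneg_left (countUpTo_le_add_sub A hPq) hα.le
  have h₁ : α * ((n + 1) / β) ≤ n - α := by
    rw [mul_div_assoc', div_le_iff₀ hβ]
    linarith
  have h₂ : α * (b' / α - 1) = b' - α := by field_simp
  linarith

/- `Nat.findGreatest (· ∈ A) n` is the last element of `A` up to `n` (or `0`), so at `n = b ∈ A`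
this is `A(b) + α·A(b/α) ≤ b + C`; the induction steps from each element of `A` to the next. -/
open Classical in
theorem countUpTo_add_mul_countUpTo_ceilPred_le (hα : 0 < α) (hαβ : α < β)
    (havoid : ratioSet A ∩ Set.Ioo α β = ∅) (n : ℕ) :
    (countUpTo A n : ℝ) + α * countUpTo A (ceilPred (Nat.findGreatest (· ∈ A) n / α))
      ≤ Nat.findGreatest (· ∈ A) n + β * (1 + α) / (β - α) := by
  have hβ : 0 < β := hα.trans hαβ
  have hC : 0 ≤ β * (1 + α) / (β - α) := div_nonneg (by positivity) (by linarith)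
  induction n with
  | zero => simpa [countUpTo_zero, ceilPred] using hC
  | succ n ih =>
    by_cases hn : n + 1 ∈ A
    swap
    · rwa [Nat.findGreatest_succ, if_neg hn, countUpTo_succ_of_notMem hn]
    rw [Nat.findGreatest_succ, if_pos hn, countUpTo_succ_of_mem hn]
    have hwin : (countUpTo A (ceilPred ((n + 1 : ℕ) / α)) : ℝ)
        ≤ countUpTo A ⌊((n + 1 : ℕ) : ℝ) / β⌋₊ := by
      exact_mod_cast countUpTo_ceilPred_div_le hα hβ havoid hn
    have hwin' := mul_le_mul_of_nonneg_left hwin hα.le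
    have hcn : (countUpTo A n : ℝ) ≤ n := by exact_mod_cast countUpTo_le A n
    push_cast at hwin' ⊢
    rcases lt_or_ge ((n : ℝ) + 1) (β * (1 + α) / (β - α)) with hsmall | hlarge
    · have : α * (countUpTo A (ceilPred (((n : ℝ) + 1) / α)) : ℝ) ≤ n + 1 := by
        calc _ ≤ α * (((n : ℝ) + 1) / α) := by
              gcongr
              exact (Nat.cast_le.mpr (countUpTo_le A _)).trans (ceilPred_le (by positivity))
          _ = n + 1 := by field_simp
      linarith
    rw [div_le_iff₀ (by linarith)] at hlarge
    linarith [mul_countUpTo_floor_le (A := A) hα hαβ (Nat.findGreatest_le (P := (· ∈ A)) n) hlarge]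

theorem countUpTo_add_mul_countUpTo_le (hα : 0 < α) (hαβ : α < β)
    (havoid : ratioSet A ∩ Set.Ioo α β = ∅) {n t : ℕ} (h : (n : ℝ) ≤ α * t) :
    (countUpTo A n : ℝ) + α * countUpTo A t ≤ α * t + α + β * (1 + α) / (β - α) := by
  classical
  have hinv := countUpTo_add_mul_countUpTo_ceilPred_le hα hαβ havoid n
  set c := Nat.findGreatest (· ∈ A) n
  have hcn : (c : ℝ) ≤ n := by exact_mod_cast Nat.findGreatest_le n
  have hPt : ceilPred (c / α) ≤ t := ceilPred_le_of_le (by rw [div_le_iff₀' hα]; linarith)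
  have hcount := mul_le_mul_of_nonneg_left (countUpTo_le_add_sub A hPt) hα.le
  have hP := mul_le_mul_of_nonneg_left (sub_one_le_ceilPred (c / α)) hα.le
  have : α * (c / α - 1) = c - α := by field_simp
  linarith

theorem countUpTo_ceilPred_mul_add_mul_countUpTo_le (hα : 0 < α) (hαβ : α < β)
    (havoid : ratioSet A ∩ Set.Ioo α β = ∅) {a : ℕ} (ha : a ∈ A) :
    (countUpTo A (ceilPred (β * a)) : ℝ) + α * countUpTo A a
      ≤ α * a + α + β * (1 + α) / (β - α) := by
  have hgap : countUpTo A (ceilPred (β * a)) ≤ countUpTo A ⌊α * a⌋₊ :=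
    countUpTo_le_of_forall_notMem fun k hk hkP hkA =>
      (mul_le_of_mul_lt_of_mem havoid hkA ha ((Nat.floor_lt (by positivity)).mp hk)).not_gt
        (lt_of_le_ceilPred (by omega) hkP)
  have := countUpTo_add_mul_countUpTo_le hα hαβ havoid (n := ⌊α * a⌋₊) (t := a)
    (Nat.floor_le (by positivity))
  have : (countUpTo A (ceilPred (β * a)) : ℝ) ≤ countUpTo A ⌊α * a⌋₊ := by exact_mod_cast hgap
  linarith

theorem exists_mem_ge_of_forall_mul_le_countUpTo {δ : ℝ} {N : ℕ} (hδ : 0 < δ)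
    (h : ∀ n ≥ N, δ * n ≤ countUpTo A n) (M : ℝ) : ∃ a ∈ A, M ≤ a := by
  obtain ⟨n, hn⟩ := exists_nat_ge (max ((N : ℝ) + 1) (M / δ))
  have hNn : (N : ℝ) + 1 ≤ n := le_of_max_le_left hn
  have hMn : M ≤ δ * n := by rw [← div_le_iff₀' hδ]; exact le_of_max_le_right hn
  have hcount := h n (by exact_mod_cast (by linarith : (N : ℝ) ≤ n))
  have hpos : 0 < countUpTo A n := by
    have : (0 : ℝ) < countUpTo A n := by linarith [mul_pos hδ (by linarith : (0 : ℝ) < n)]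
    exact_mod_cast this
  obtain ⟨a, ha, hle⟩ := exists_mem_countUpTo_le hpos
  exact ⟨a, ha, by linarith [(Nat.cast_le (α := ℝ)).mpr hle]⟩

theorem mul_le_of_eventually_lt_countUpTo_div (hα : 0 < α) (hαβ : α < β)
    (havoid : ratioSet A ∩ Set.Ioo α β = ∅) {δ : ℝ} (hδ : 0 < δ)
    (h : ∀ᶠ n in atTop, δ < (countUpTo A n : ℝ) / n) : (α + β) * δ ≤ α := by
  have hβ : 0 < β := hα.trans hαβ
  obtain ⟨N, hN⟩ := eventually_atTop.mp h
  have hcount : ∀ n ≥ N, δ * n ≤ countUpTo A n := fun n hn => by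
    have hlt := hN n hn
    rcases Nat.eq_zero_or_pos n with rfl | hn0
    · simp only [CharP.cast_eq_zero, div_zero] at hlt
      linarith
    · exact ((lt_div_iff₀ (by positivity)).mp hlt).le
  refine le_of_forall_exists_mul_le_mul_add (K := α + β * (1 + α) / (β - α) + δ) fun M => ?_
  obtain ⟨a, ha, haM⟩ :=
    exists_mem_ge_of_forall_mul_le_countUpTo hδ hcount (max M (max N ((N + 1) / β)))
  refine ⟨a, le_of_max_le_left haM, ?_⟩
  have haN : (N : ℝ) ≤ a := (le_max_left _ _).trans (le_of_max_le_right haM)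
  have hβa : N + 1 ≤ β * a := by
    rw [← div_le_iff₀' hβ]; exact (le_max_right _ _).trans (le_of_max_le_right haM)
  have hu := sub_one_le_ceilPred (β * a)
  have h₁ := hcount a (by exact_mod_cast haN)
  have h₂ := hcount (ceilPred (β * a))
    (by exact_mod_cast (by linarith : (N : ℝ) ≤ ceilPred (β * a)))
  have := mul_le_mul_of_nonneg_left hu hδ.le
  have := mul_le_mul_of_nonneg_left h₁ hα.le
  have := countUpTo_ceilPred_mul_add_mul_countUpTo_le hα hαβ havoid ha
  linarith

end RatioGap

theorem stmt8_general (A : Set ℕ) (α β : ℝ) (hα : 0 < α) (hαβ : α < β)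
    (havoid : ratioSet A ∩ Set.Ioo α β = ∅) :
    (1 + α / β) * lowerDensity A ≤ α / β := by
  have hβ : 0 < β := hα.trans hαβ
  have hd : lowerDensity A ≤ α / (α + β) := by
    refine le_of_forall_lt_imp_le_of_dense fun δ hδ => ?_
    rcases le_or_gt δ 0 with hδ0 | hδ0
    · exact hδ0.trans (by positivity)
    rw [le_div_iff₀ (by positivity), mul_comm]
    exact mul_le_of_eventually_lt_countUpTo_div hα hαβ havoid hδ0 <|
      eventually_lt_of_lt_liminf hδ (isBoundedUnder_of ⟨0, fun n => by positivity⟩)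
  calc (1 + α / β) * lowerDensity A ≤ (1 + α / β) * (α / (α + β)) := by gcongr
    _ = α / β := by field_simp; ring

theorem stmt8 (A : Set ℕ) (hA : 0 ∉ A) (α β : ℝ) (hα : 0 < α) (hαβ : α < β)
    (hβ : β ≤ 1) (havoid : ratioSet A ∩ Set.Ioo α β = ∅) :
    (1 + α / β) * lowerDensity A ≤ α / β :=
  stmt8_general A α β hα hαβ havoid
end

section
/- There exist three pairwise disjoint sets A, B, C ⊆ ℕ with A ∪ B ∪ C = ℕ such that none of R(A), R(B), R(C) is dense in [0,∞). Specifically, one may take A, B, C to consist of the natural numbers whose base-5 representation begins with digit 1, with digit 2, and with digit 3 or 4, respectively. -/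
open Set

/-- For `0 < lo ≤ hi ≤ b`, the naturals whose leading base-`b` digit lies in `[lo, hi)`. -/
def leadingDigitIco (b lo hi : ℕ) : Set ℕ := {n | ∃ k, lo * b ^ k ≤ n ∧ n < hi * b ^ k}

section LeadingDigit

variable {b lo mid mid' hi : ℕ}

theorem leadingDigitIco_union (hlo : lo ≤ mid) (hhi : mid ≤ hi) :
    leadingDigitIco b lo mid ∪ leadingDigitIco b mid hi = leadingDigitIco b lo hi := by
  ext n
  constructor
  · rintro (⟨k, h₁, h₂⟩ | ⟨k, h₁, h₂⟩)
    · exact ⟨k, h₁, h₂.trans_le (Nat.mul_le_mul_right _ hhi)⟩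
    · exact ⟨k, (Nat.mul_le_mul_right _ hlo).trans h₁, h₂⟩
  · rintro ⟨k, h₁, h₂⟩
    rcases lt_or_ge n (mid * b ^ k) with h | h
    · exact Or.inl ⟨k, h₁, h⟩
    · exact Or.inr ⟨k, h, h₂⟩

theorem leadingDigitIco_one_base (hb : 1 < b) : leadingDigitIco b 1 b = {n | 0 < n} := by
  ext n
  constructor
  · rintro ⟨k, h₁, -⟩
    exact (Nat.one_le_pow k b (by omega)).trans (by simpa using h₁)
  · intro hn
    refine ⟨Nat.log b n, by simpa using Nat.pow_log_le_self b (Nat.ne_of_gt hn), ?_⟩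
    simpa [pow_succ, mul_comm] using Nat.lt_pow_succ_log_self hb n

theorem disjoint_leadingDigitIco (hb : 1 < b) (hlo : 0 < lo) (hmid : mid ≤ mid') (hhi : hi ≤ b) :
    Disjoint (leadingDigitIco b lo mid) (leadingDigitIco b mid' hi) := by
  rw [Set.disjoint_left]
  rintro n ⟨k, hk₁, hk₂⟩ ⟨k', hk'₁, hk'₂⟩
  have hk : k ≤ k' := by
    have : b ^ k < b ^ (k' + 1) :=
      calc b ^ k ≤ lo * b ^ k := Nat.le_mul_of_pos_left _ hlo
        _ ≤ n := hk₁
        _ < hi * b ^ k' := hk'₂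
        _ ≤ b * b ^ k' := Nat.mul_le_mul_right _ hhi
        _ = b ^ (k' + 1) := (pow_succ' b k').symm
    exact Nat.lt_succ_iff.mp ((Nat.pow_lt_pow_iff_right (by omega)).mp this)
  have hmid' : mid * b ^ k ≤ mid' * b ^ k' :=
    Nat.mul_le_mul hmid (Nat.pow_le_pow_right (by omega) hk)
  omega

theorem disjoint_ratioSet_leadingDigitIco (hb : 0 < b) (hlo : 0 < lo) :
    Disjoint (ratioSet (leadingDigitIco b lo hi)) (Ioo ((hi : ℝ) / lo) (b * lo / hi)) := by
  rw [Set.disjoint_left]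
  rintro _ ⟨m, ⟨a, hm₁, hm₂⟩, n, ⟨c, hn₁, hn₂⟩, rfl⟩ ⟨hlow, hupp⟩
  have hn : 0 < n := (Nat.mul_pos hlo (Nat.pow_pos hb)).trans_le hn₁
  have hhi : 0 < hi := Nat.pos_of_mul_pos_right (hn.trans hn₂)
  have hlow' : hi * n < m * lo := by
    rw [div_lt_div_iff₀ (by positivity) (by positivity)] at hlow
    exact_mod_cast hlow
  have hupp' : m * hi < b * lo * n := by
    rw [div_lt_div_iff₀ (by positivity) (by positivity)] at hupp
    exact_mod_cast hupp
  rcases le_or_gt a c with hac | hca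
  · have hpow : b ^ a ≤ b ^ c := Nat.pow_le_pow_right hb hac
    exact (calc m * lo < hi * b ^ a * lo := by gcongr
      _ ≤ hi * (lo * b ^ c) := by rw [mul_right_comm, mul_assoc]; gcongr
      _ ≤ hi * n := by gcongr
      _ < m * lo := hlow').false
  · have hpow : b ^ (c + 1) ≤ b ^ a := Nat.pow_le_pow_right hb hca
    exact (calc b * lo * n < b * lo * (hi * b ^ c) := by gcongr
      _ = lo * b ^ (c + 1) * hi := by ring
      _ ≤ m * hi := by gcongr; exact (Nat.mul_le_mul_left lo hpow).trans hm₁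
      _ < b * lo * n := hupp').false

theorem not_Ici_subset_closure_ratioSet_leadingDigitIco (hlo : 0 < lo) (hlohi : lo < hi)
    (hgap : hi ^ 2 < b * lo ^ 2) :
    ¬ Ici (0 : ℝ) ⊆ closure (ratioSet (leadingDigitIco b lo hi)) := by
  have hb : 0 < b := Nat.pos_of_mul_pos_right ((Nat.zero_le _).trans_lt hgap)
  have hhi : 0 < hi := hlo.trans hlohi
  have hIoo : ((hi : ℝ) / lo) < b * lo / hi := by
    rw [div_lt_div_iff₀ (by exact_mod_cast hlo) (by exact_mod_cast hhi)]
    exact_mod_cast (by nlinarith : hi * hi < b * lo * lo)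
  obtain ⟨x, hx⟩ := exists_between hIoo
  have hx₀ : (0 : ℝ) ≤ x := (div_nonneg hi.cast_nonneg lo.cast_nonneg).trans hx.1.le
  intro hdense
  exact ((disjoint_ratioSet_leadingDigitIco hb hlo).symm.closure_right isOpen_Ioo).ne_of_mem
    hx (hdense hx₀) rfl

end LeadingDigit

theorem stmt9 :
    ∃ A B C : Set ℕ,
      Disjoint A B ∧ Disjoint A C ∧ Disjoint B C ∧
      A ∪ B ∪ C = {n : ℕ | 0 < n} ∧
      ¬ (Set.Ici (0 : ℝ) ⊆ closure (ratioSet A)) ∧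
      ¬ (Set.Ici (0 : ℝ) ⊆ closure (ratioSet B)) ∧
      ¬ (Set.Ici (0 : ℝ) ⊆ closure (ratioSet C)) := by
  refine ⟨leadingDigitIco 5 1 2, leadingDigitIco 5 2 3, leadingDigitIco 5 3 5,
    disjoint_leadingDigitIco (by norm_num) (by norm_num) le_rfl (by norm_num),
    disjoint_leadingDigitIco (by norm_num) (by norm_num) (by norm_num) le_rfl,
    disjoint_leadingDigitIco (by norm_num) (by norm_num) le_rfl le_rfl, ?_,
    not_Ici_subset_closure_ratioSet_leadingDigitIco (by norm_num) (by norm_num) (by norm_num),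
    not_Ici_subset_closure_ratioSet_leadingDigitIco (by norm_num) (by norm_num) (by norm_num),
    not_Ici_subset_closure_ratioSet_leadingDigitIco (by norm_num) (by norm_num) (by norm_num)⟩
  rw [leadingDigitIco_union (by norm_num) (by norm_num), leadingDigitIco_union (by norm_num)
    (by norm_num), leadingDigitIco_one_base (by norm_num)]
end

section
/- If A and B are disjoint subsets of ℕ with A ∪ B = ℕ, then at least one of R(A), R(B) is dense in [0,∞). -/
/-!
Suppose `R(A)` misses an interval `(a, b)` and `R(B)` misses `(c, d)`. If `A` contains every
integer of a long interval `[n, r n]`, then every integer `k` with `k / m ∈ (a, b)` for some `m` in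
that interval lies in `B`; these `k` fill an interval of ratio about `r b / a`. Going back to `A`
through `(c, d)` multiplies the ratio by about `d / c` again, so `A` contains integer intervals of
arbitrarily large ratio, and then `R(A)` meets `(a, b)` after all. An infinite part of the partition
gives intervals of ratio `1` to start from.
-/

open Filter Set

lemma inv_mem_ratioSet {S : Set ℕ} {x : ℝ} (hx : x ∈ ratioSet S) : x⁻¹ ∈ ratioSet S := by
  obtain ⟨m, hm, n, hn, rfl⟩ := hx
  exact ⟨n, hn, m, hm, inv_div _ _⟩

lemma exists_one_le_disjoint_Ioo_of_disjoint_Ioo {S : Set ℕ} {a b : ℝ} (ha : 0 < a)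
    (hab : a < b) (h : Disjoint (Ioo a b) (ratioSet S)) :
    ∃ a' b' : ℝ, 1 ≤ a' ∧ a' < b' ∧ Disjoint (Ioo a' b') (ratioSet S) := by
  rcases lt_or_ge 1 b with hb | hb
  · exact ⟨max a 1, b, le_max_right _ _, max_lt hab hb,
      h.mono_left (Ioo_subset_Ioo_left (le_max_left _ _))⟩
  · have hb₀ : 0 < b := ha.trans hab
    refine ⟨b⁻¹, a⁻¹, one_le_inv₀ hb₀ |>.2 hb, (inv_lt_inv₀ hb₀ ha).2 hab, ?_⟩
    refine disjoint_left.2 fun x ⟨hbx, hxa⟩ hx => disjoint_left.1 h ?_ (inv_mem_ratioSet hx)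
    have hx₀ : 0 < x := (inv_pos.2 hb₀).trans hbx
    exact ⟨(lt_inv_comm₀ ha hx₀).2 hxa, (inv_lt_comm₀ hx₀ hb₀).2 hbx⟩

lemma exists_one_le_disjoint_Ioo_of_not_subset_closure {S : Set ℕ}
    (h : ¬ Ici (0 : ℝ) ⊆ closure (ratioSet S)) :
    ∃ a b : ℝ, 1 ≤ a ∧ a < b ∧ Disjoint (Ioo a b) (ratioSet S) := by
  obtain ⟨x, hx₀, hx⟩ := not_subset.1 h
  obtain ⟨ε, hε, hball⟩ := Metric.isOpen_iff.1 isClosed_closure.isOpen_compl x hx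
  have hdisj : Disjoint (Ioo (x + ε / 2) (x + ε)) (ratioSet S) := by
    refine disjoint_left.2 fun y hy hyS => hball ?_ (subset_closure hyS)
    rw [Real.ball_eq_Ioo]
    exact Ioo_subset_Ioo (by linarith) le_rfl hy
  exact exists_one_le_disjoint_Ioo_of_disjoint_Ioo (add_pos_of_nonneg_of_pos hx₀ (half_pos hε))
    (by linarith) hdisj

lemma eventually_le_mul_natCast {c d : ℝ} (hd : 0 < d) : ∀ᶠ n : ℕ in atTop, c ≤ d * n :=
  (tendsto_natCast_atTop_atTop.const_mul_atTop hd).eventually_ge_atTop c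

/-- `hn` makes consecutive intervals `(a m, b m)` overlap, so their union over the integers
`m ∈ [n, r n]` covers `(a n, b (r n - 1)]`. -/
lemma exists_div_mem_Ioo {a b r : ℝ} {n k : ℕ} (ha : 0 < a) (hab : a < b) (hr : 1 ≤ r)
    (hn : b ≤ (b - a) * n) (hk₁ : a * n < k) (hk₂ : k ≤ b * (r * n - 1)) :
    ∃ m : ℕ, n ≤ m ∧ (m : ℝ) ≤ r * n ∧ (k : ℝ) / m ∈ Ioo a b := by
  have hb : 0 < b := ha.trans hab
  have hn₀ : (0 : ℝ) < n := pos_of_mul_pos_right (hb.trans_le hn) (sub_pos.2 hab).le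
  set j := ⌊(k : ℝ) / b⌋₊ + 1
  have hj₁ : (k : ℝ) < b * j := by
    have := Nat.lt_floor_add_one ((k : ℝ) / b)
    push_cast [j]
    rwa [div_lt_iff₀' hb] at this
  have hj₂ : b * j ≤ k + b := by
    have := Nat.floor_le (div_nonneg (Nat.cast_nonneg (α := ℝ) k) hb.le)
    push_cast [j]
    rw [le_div_iff₀' hb] at this
    linarith
  rcases le_total j n with hjn | hnj
  · refine ⟨n, le_rfl, le_mul_of_one_le_left hn₀.le hr, ?_, ?_⟩
    · rwa [lt_div_iff₀ hn₀]
    · rw [div_lt_iff₀ hn₀]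
      have : (j : ℝ) ≤ n := by exact_mod_cast hjn
      nlinarith
  · have hj₀ : (0 : ℝ) < j := by positivity
    refine ⟨j, hnj, by nlinarith, ?_, ?_⟩
    · rw [lt_div_iff₀ hj₀]
      have : (n : ℝ) ≤ j := by exact_mod_cast hnj
      nlinarith
    · rwa [div_lt_iff₀ hj₀]

def HasBlocks (S : Set ℕ) (r : ℝ) : Prop :=
  ∃ᶠ n : ℕ in atTop, ∀ k : ℕ, n ≤ k → (k : ℝ) ≤ r * n → k ∈ S

lemma Set.Infinite.hasBlocks_one {S : Set ℕ} (hS : S.Infinite) : HasBlocks S 1 := by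
  refine Nat.frequently_atTop_iff_infinite.2 (hS.mono fun n hn k hnk hkn => ?_)
  rw [one_mul, Nat.cast_le] at hkn
  rwa [le_antisymm hkn hnk]

lemma HasBlocks.of_disjoint_Ioo {S T : Set ℕ} {a b r ρ : ℝ} (hST : {n | 0 < n} ⊆ S ∪ T)
    (ha : 0 < a) (hab : a < b) (hρ : ρ < b / a) (hr : 1 ≤ r)
    (hS : Disjoint (Ioo a b) (ratioSet S)) (h : HasBlocks S r) : HasBlocks T (r * ρ) := by
  rw [lt_div_iff₀ ha] at hρ
  refine frequently_atTop.2 fun N => ?_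
  have hlarge : ∀ᶠ n : ℕ in atTop,
      N ≤ a * n ∧ b ≤ (b - a) * n ∧ r * ρ * (a * n + 1) ≤ b * (r * n - 1) := by
    filter_upwards [eventually_le_mul_natCast ha, eventually_le_mul_natCast (sub_pos.2 hab),
      eventually_le_mul_natCast (c := r * ρ + b) (mul_pos (by linarith) (sub_pos.2 hρ))]
      with n h₁ h₂ h₃
    exact ⟨h₁, h₂, by linarith⟩
  obtain ⟨n, hblock, hNn, hn, hgap⟩ := (h.and_eventually hlarge).exists
  have hfloor := Nat.lt_floor_add_one (a * n)
  have hfloor' := Nat.floor_le (by positivity : 0 ≤ a * n)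
  refine ⟨⌊a * n⌋₊ + 1, by exact_mod_cast hNn.trans hfloor.le, fun k hk₁ hk₂ => ?_⟩
  push_cast at hk₂
  have hk₁' : a * n < k := hfloor.trans_le (by exact_mod_cast hk₁)
  obtain ⟨m, hnm, hmr, hkm⟩ :=
    exists_div_mem_Ioo ha hab hr hn hk₁' (by nlinarith [Nat.cast_nonneg (α := ℝ) k])
  have hkS : k ∉ S := fun hkS => disjoint_left.1 hS hkm ⟨k, hkS, m, hblock m hnm hmr, rfl⟩
  exact (hST (Nat.lt_of_lt_of_le (Nat.succ_pos _) hk₁)).resolve_left hkS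

lemma HasBlocks.not_disjoint_Ioo {S : Set ℕ} {a b r : ℝ} (ha : 1 ≤ a) (hab : a < b)
    (har : a < r) (h : HasBlocks S r) : ¬ Disjoint (Ioo a b) (ratioSet S) := by
  obtain ⟨c, hac, hc⟩ := exists_between (lt_min hab har)
  have hcb : c < b := hc.trans_le (min_le_left _ _)
  have hcr : c < r := hc.trans_le (min_le_right _ _)
  obtain ⟨n, hblock, hnb, hnr⟩ := (h.and_eventually ((eventually_le_mul_natCast
    (sub_pos.2 hcb)).and (eventually_le_mul_natCast (sub_pos.2 hcr)))).exists
  have hn₀ : (0 : ℝ) < n := pos_of_mul_pos_right (one_pos.trans_le hnb) (sub_pos.2 hcb).le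
  have hc₁ : 1 < c := ha.trans_lt hac
  have hk₁ := Nat.le_ceil (c * n)
  have hk₂ := Nat.ceil_lt_add_one (by positivity : 0 ≤ c * n)
  have hnk : (n : ℝ) ≤ ⌈c * n⌉₊ := (by nlinarith : (n : ℝ) ≤ c * n).trans hk₁
  have hkS : ⌈c * n⌉₊ ∈ S := hblock _ (by exact_mod_cast hnk) (by linarith)
  have hnS : n ∈ S := hblock n le_rfl (by nlinarith)
  refine not_disjoint_iff.2 ⟨_, ⟨?_, ?_⟩, ⌈c * n⌉₊, hkS, n, hnS, rfl⟩
  · rw [lt_div_iff₀ hn₀]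
    nlinarith
  · rw [div_lt_iff₀ hn₀]
    linarith

theorem stmt11_general (A B : Set ℕ) (hunion : A ∪ B = {n : ℕ | 0 < n}) :
    Set.Ici (0 : ℝ) ⊆ closure (ratioSet A) ∨
    Set.Ici (0 : ℝ) ⊆ closure (ratioSet B) := by
  wlog hA : A.Infinite generalizing A B
  · refine (this B A (by rwa [union_comm]) ?_).symm
    have hAB : (A ∪ B).Infinite := hunion ▸ Ioi_infinite 0
    exact (infinite_union.1 hAB).resolve_left hA
  by_contra! hdense
  obtain ⟨a, b, ha, hab, hAab⟩ := exists_one_le_disjoint_Ioo_of_not_subset_closure hdense.1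
  obtain ⟨c, d, hc, hcd, hBcd⟩ := exists_one_le_disjoint_Ioo_of_not_subset_closure hdense.2
  obtain ⟨ρ, hρ, hρab⟩ := exists_between ((one_lt_div (by linarith)).2 hab)
  obtain ⟨σ, hσ, hσcd⟩ := exists_between ((one_lt_div (by linarith)).2 hcd)
  have hblocks : ∀ k : ℕ, HasBlocks A ((ρ * σ) ^ k) := by
    intro k
    induction k with
    | zero => simpa using hA.hasBlocks_one
    | succ k ih =>
      have hk : 1 ≤ (ρ * σ) ^ k := one_le_pow₀ (by nlinarith)
      rw [pow_succ, ← mul_assoc]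
      exact (ih.of_disjoint_Ioo hunion.ge (by linarith) hab hρab hk hAab).of_disjoint_Ioo
        (by rw [union_comm, hunion]) (by linarith) hcd hσcd (by nlinarith) hBcd
  obtain ⟨k, hk⟩ := pow_unbounded_of_one_lt a (by nlinarith : 1 < ρ * σ)
  exact (hblocks k).not_disjoint_Ioo ha hab hk hAab

theorem stmt11 (A B : Set ℕ) (hdisj : Disjoint A B) (hunion : A ∪ B = {n : ℕ | 0 < n}) :
    Set.Ici (0 : ℝ) ⊆ closure (ratioSet A) ∨
    Set.Ici (0 : ℝ) ⊆ closure (ratioSet B) :=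
  stmt11_general A B hunion
end

section
/- The set A = {2^j : j ≥ 2} ∪ {3^k : k ≥ 2} has a quotient set R(A) that is dense in [0,∞). -/
/-!
Since `log 3 / log 2` is irrational, Dirichlet's theorem gives `m log 3 - n log 2` of arbitrarily
small nonzero size `|d|` with `m, n ∈ ℕ`. Starting from `N log 3 - n log 2` far below the target
(if `d > 0`) or from `m log 3 - N log 2` far above it (if `d < 0`), adding multiples of `d` comes
within `|d|` of any real number, so these differences with exponents `≥ 2` are dense in `ℝ`. Applying `exp` gives density of
`3 ^ m / 2 ^ n` in `(0, ∞)`, and `0` lies in the closure of `(0, ∞)`.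
-/

open Real Metric

theorem irrational_log_div_log_of_coprime {p q : ℕ} (hp : 1 < p) (hq : 1 < q)
    (hpq : p.Coprime q) : Irrational (log p / log q) := by
  rintro ⟨r, hr⟩
  have hlogp : 0 < log p := log_pos (by exact_mod_cast hp)
  have hlogq : 0 < log q := log_pos (by exact_mod_cast hq)
  have hr0 : 0 < r := by exact_mod_cast hr ▸ div_pos hlogp hlogq
  obtain ⟨n, hn⟩ := Int.eq_ofNat_of_zero_le (Rat.num_pos.2 hr0).le
  have hlog : log ((p : ℝ) ^ r.den) = log ((q : ℝ) ^ n) := by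
    rw [Rat.cast_def, hn] at hr
    field_simp at hr
    rw [log_pow, log_pow]
    push_cast at hr ⊢
    linarith
  have hpow : p ^ r.den = q ^ n := by
    exact_mod_cast
      log_injOn_pos (Set.mem_Ioi.2 (by positivity)) (Set.mem_Ioi.2 (by positivity)) hlog
  have hqn : q ^ n = 1 := (Nat.coprime_self _).1 (hpow ▸ hpq.pow r.den n)
  rcases Nat.pow_eq_one.1 hqn with h | rfl
  · omega
  · exact (Rat.num_pos.2 hr0).ne' (by simpa using hn)

theorem exists_nat_mul_sub_nat_mul_abs_pos_lt {a b ε : ℝ} (ha : 0 < a) (hb : 0 < b)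
    (h : Irrational (a / b)) (hε : 0 < ε) :
    ∃ m n : ℕ, 0 < |m * a - n * b| ∧ |m * a - n * b| < ε := by
  obtain ⟨N, hN⟩ := exists_nat_gt (b / min ε a)
  obtain ⟨n, m, hm, -, hmn⟩ := exists_int_int_abs_mul_sub_le (a / b) N.succ_pos
  have hsmall : |m * a - n * b| < min ε a :=
    calc |m * a - n * b| = b * |m * (a / b) - n| := by
          rw [← abs_of_pos hb, ← abs_mul, abs_of_pos hb]; congr 1; field_simp
      _ ≤ b * (1 / (N.succ + 1)) := by gcongr
      _ < min ε a := by
          rw [div_lt_iff₀ (by positivity)] at hN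
          rw [mul_one_div, div_lt_iff₀ (by positivity)]
          push_cast; nlinarith [lt_min hε ha]
  have hn : 0 < n := by
    have : (1 : ℝ) ≤ m := by exact_mod_cast hm
    have : (0 : ℝ) < n * b := by nlinarith [(abs_lt.1 (hsmall.trans_le (min_le_right ε a))).2]
    exact_mod_cast pos_of_mul_pos_left this hb.le
  lift m to ℕ using hm.le
  lift n to ℕ using hn.le
  refine ⟨m, n, abs_pos.2 fun h0 => ?_, hsmall.trans_le (min_le_left ε a)⟩
  refine (h.natCast_mul (Int.natCast_pos.1 hm).ne').ne_nat n ?_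
  field_simp
  linarith

theorem exists_nat_abs_add_mul_sub_lt {x₀ t d : ℝ} (hd : 0 < d) (h : x₀ ≤ t) :
    ∃ k : ℕ, |x₀ + k * d - t| < d := by
  refine ⟨⌊(t - x₀) / d⌋₊, ?_⟩
  have h₁ := Nat.floor_le (div_nonneg (sub_nonneg.2 h) hd.le)
  have h₂ := Nat.lt_floor_add_one ((t - x₀) / d)
  rw [le_div_iff₀ hd] at h₁
  rw [div_lt_iff₀ hd] at h₂
  rw [abs_sub_lt_iff]
  constructor <;> linarith

theorem dense_setOf_nat_mul_sub_nat_mul {a b : ℝ} (ha : 0 < a) (hb : 0 < b)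
    (h : Irrational (a / b)) (N : ℕ) :
    Dense {x | ∃ m n : ℕ, N ≤ m ∧ N ≤ n ∧ m * a - n * b = x} := by
  rw [Metric.dense_iff]
  intro t ε hε
  obtain ⟨m₀, n₀, hd₀, hdε⟩ := exists_nat_mul_sub_nat_mul_abs_pos_lt ha hb h hε
  set d := (m₀ : ℝ) * a - n₀ * b
  suffices ∃ m n : ℕ, N ≤ m ∧ N ≤ n ∧ ∃ k : ℕ, |m * a - n * b + k * d - t| < |d| by
    obtain ⟨m, n, hm, hn, k, hk⟩ := this
    exact ⟨_, mem_ball.2 (hk.trans hdε), m + k * m₀, n + k * n₀, by omega, by omega,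
      by push_cast; ring⟩
  rcases lt_or_gt_of_ne (abs_pos.1 hd₀) with hd | hd
  · obtain ⟨m, hm⟩ := exists_nat_gt ((t + N * b) / a)
    rw [div_lt_iff₀ ha] at hm
    have hm' : (m : ℝ) ≤ max m N := by exact_mod_cast le_max_left m N
    obtain ⟨k, hk⟩ := exists_nat_abs_add_mul_sub_lt (x₀ := -(max m N * a - N * b)) (t := -t)
      (neg_pos.2 hd) (by nlinarith)
    refine ⟨max m N, N, le_max_right m N, le_rfl, k, ?_⟩
    rw [abs_of_neg hd, ← abs_neg]
    convert hk using 2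
    push_cast; ring
  · obtain ⟨n, hn⟩ := exists_nat_gt ((N * a - t) / b)
    rw [div_lt_iff₀ hb] at hn
    have hn' : (n : ℝ) ≤ max n N := by exact_mod_cast le_max_left n N
    obtain ⟨k, hk⟩ := exists_nat_abs_add_mul_sub_lt (x₀ := N * a - max n N * b) (t := t)
      hd (by nlinarith)
    refine ⟨N, max n N, le_rfl, le_max_right n N, k, ?_⟩
    rw [abs_of_pos hd]
    convert hk using 3

theorem stmt14 :
    Set.Ici (0 : ℝ) ⊆
      closure (ratioSet {n : ℕ | (∃ j : ℕ, 2 ≤ j ∧ n = 2 ^ j) ∨ (∃ k : ℕ, 2 ≤ k ∧ n = 3 ^ k)}) := by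
  set A : Set ℕ := {n : ℕ | (∃ j : ℕ, 2 ≤ j ∧ n = 2 ^ j) ∨ (∃ k : ℕ, 2 ≤ k ∧ n = 3 ^ k)}
  set S : Set ℝ := {x | ∃ m n : ℕ, 2 ≤ m ∧ 2 ≤ n ∧ m * log 3 - n * log 2 = x}
  have hirr : Irrational (log 3 / log 2) := by
    exact_mod_cast irrational_log_div_log_of_coprime (p := 3) (q := 2) (by norm_num) (by norm_num)
      (by norm_num)
  have hdense : Dense S :=
    dense_setOf_nat_mul_sub_nat_mul (log_pos (by norm_num)) (log_pos (by norm_num)) hirr 2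
  have himage : exp '' S ⊆ ratioSet A := by
    rintro _ ⟨_, ⟨m, n, hm, hn, rfl⟩, rfl⟩
    refine ⟨3 ^ m, Or.inr ⟨m, hm, rfl⟩, 2 ^ n, Or.inl ⟨n, hn, rfl⟩, ?_⟩
    rw [exp_sub, exp_nat_mul, exp_nat_mul, exp_log (by norm_num), exp_log (by norm_num)]
    norm_num
  rw [← closure_Ioi]
  refine closure_minimal (fun x hx => ?_) isClosed_closure
  exact closure_mono himage
    (exp_log hx ▸ mem_closure_image continuous_exp.continuousAt (hdense (log x)))
end

section
/- The set A = {2^j : j ≥ 2} ∪ {3^k : k ≥ 2} contains no arithmetic progression of length three: there are no distinct x, y, z ∈ A with x < y < z and x + z = 2y. -/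
/-!
Three terms of the same kind cannot form a progression: in `p ^ a + p ^ c = m * p ^ b` with
`a < b, c`, the power `p ^ (a + 1)` divides everything except `p ^ a`. Mixed progressions are
excluded by congruences: powers of two in `A` are `0 mod 4` and prime to `3`, powers of three
are odd and divisible by `3`. If the outer terms are of different kinds, `x + z` is odd; if both
are powers of two, `4 ∣ x + z` but `2 * y ≡ 2 mod 4`; if both are powers of three, `3 ∣ x + z`
but `3 ∤ 2 * y`.
-/

theorem pow_add_pow_ne_mul_pow {p a b c : ℕ} (m : ℕ) (hp : 1 < p) (hab : a < b) (hac : a < c) :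
    p ^ a + p ^ c ≠ m * p ^ b := by
  intro h
  have hb : p ^ (a + 1) ∣ p ^ a + p ^ c := h ▸ dvd_mul_of_dvd_right (pow_dvd_pow p hab) m
  have ha : p ^ (a + 1) ∣ p ^ a := (Nat.dvd_add_left (pow_dvd_pow p hac)).mp hb
  exact absurd ((Nat.pow_dvd_pow_iff_le_right hp).mp ha) (Nat.not_succ_le_self a)

theorem pow_add_pow_ne_two_mul_pow {p a b c : ℕ} (hp : 1 < p) (hab : p ^ a < p ^ b)
    (hbc : p ^ b < p ^ c) : p ^ a + p ^ c ≠ 2 * p ^ b := by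
  rw [Nat.pow_lt_pow_iff_right hp] at hab hbc
  exact pow_add_pow_ne_mul_pow 2 hp hab (hab.trans hbc)

theorem four_dvd_two_pow {j : ℕ} (hj : 2 ≤ j) : 4 ∣ 2 ^ j :=
  pow_dvd_pow 2 hj

theorem not_three_dvd_two_pow (j : ℕ) : ¬ 3 ∣ 2 ^ j := fun h => by
  have := Nat.prime_three.dvd_of_dvd_pow h
  omega

theorem three_pow_mod_two (k : ℕ) : 3 ^ k % 2 = 1 :=
  Nat.odd_iff.mp (Odd.pow (by decide))

theorem stmt15 :
    ∀ x ∈ {n : ℕ | (∃ j : ℕ, 2 ≤ j ∧ n = 2 ^ j) ∨ (∃ k : ℕ, 2 ≤ k ∧ n = 3 ^ k)},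
    ∀ y ∈ {n : ℕ | (∃ j : ℕ, 2 ≤ j ∧ n = 2 ^ j) ∨ (∃ k : ℕ, 2 ≤ k ∧ n = 3 ^ k)},
    ∀ z ∈ {n : ℕ | (∃ j : ℕ, 2 ≤ j ∧ n = 2 ^ j) ∨ (∃ k : ℕ, 2 ≤ k ∧ n = 3 ^ k)},
      x < y → y < z → x + z ≠ 2 * y := by
  rintro x (⟨a, ha, rfl⟩ | ⟨a, ha, rfl⟩) y (⟨b, hb, rfl⟩ | ⟨b, hb, rfl⟩)
    z (⟨c, hc, rfl⟩ | ⟨c, hc, rfl⟩) hxy hyz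
  · exact pow_add_pow_ne_two_mul_pow (by norm_num) hxy hyz
  · have := four_dvd_two_pow ha; have := three_pow_mod_two c; omega
  · have := four_dvd_two_pow ha; have := four_dvd_two_pow hc; have := three_pow_mod_two b; omega
  · have := dvd_pow_self 3 (by omega : b ≠ 0); have := dvd_pow_self 3 (by omega : c ≠ 0)
    have := not_three_dvd_two_pow a; omega
  · have := three_pow_mod_two a; have := four_dvd_two_pow hb; have := four_dvd_two_pow hc; omega
  · have := dvd_pow_self 3 (by omega : a ≠ 0); have := dvd_pow_self 3 (by omega : c ≠ 0)
    have := not_three_dvd_two_pow b; omega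
  · have := three_pow_mod_two a; have := four_dvd_two_pow hc; omega
  · exact pow_add_pow_ne_two_mul_pow (by norm_num) hxy hyz
end
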